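/- arXiv:1907.00306 — 7 statements merged into one kernel-verified Lean document; each statement's English description precedes it below -/
import Mathlib

section
/- For any natural number n and any formula A of predicate modal logic, the system QK proves □^{n+1}⊥ → (A ↔ A^{⊤(n)}), where A^{⊤(n)} is obtained from A by replacing every subformula occurrence of the form □B at modal depth n by ⊤. -/
namespace PML

/-- Formulas of predicate modal logic, with propositional variables (language L''). -/
inductive Fml : Type
  | verum : Fml
  | falsum : Fml
  | pvar (q : ℕ) : Fml
  | pred (P : ℕ) (args : List ℕ) : Fml
  | neg (A : Fml) : Fml
  | imp (A B : Fml) : Fml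
  | all (u : ℕ) (A : Fml) : Fml
  | box (A : Fml) : Fml

namespace Fml

def lor (A B : Fml) : Fml := A.neg.imp B
def land (A B : Fml) : Fml := (A.imp B.neg).neg
def iff (A B : Fml) : Fml := (A.imp B).land (B.imp A)
def ex (u : ℕ) (A : Fml) : Fml := (Fml.all u A.neg).neg
def boxdot (A : Fml) : Fml := A.box.land A

def boxIter : ℕ → Fml → Fml
  | 0, A => A
  | n + 1, A => (boxIter n A).box

/-- Free variables. -/
def free : Fml → Finset ℕ
  | pred _ args => args.toFinset
  | neg A => A.free
  | imp A B => A.free ∪ B.free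
  | all u A => A.free.erase u
  | box A => A.free
  | _ => ∅

/-- Bound variables. -/
def bound : Fml → Finset ℕ
  | neg A => A.bound
  | imp A B => A.bound ∪ B.bound
  | all u A => insert u A.bound
  | box A => A.bound
  | _ => ∅

/-- Propositional variables occurring in a formula. -/
def pvars : Fml → Finset ℕ
  | pvar q => {q}
  | neg A => A.pvars
  | imp A B => A.pvars ∪ B.pvars
  | all _ A => A.pvars
  | box A => A.pvars
  | _ => ∅

/-- Predicate symbols occurring in a formula. -/
def preds : Fml → Finset ℕ
  | pred P _ => {P}
  | neg A => A.preds
  | imp A B => A.preds ∪ B.preds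
  | all _ A => A.preds
  | box A => A.preds
  | _ => ∅

/-- Predicate symbols together with the arity they are used with. -/
def predSig : Fml → Finset (ℕ × ℕ)
  | pred P args => {(P, args.length)}
  | neg A => A.predSig
  | imp A B => A.predSig ∪ B.predSig
  | all _ A => A.predSig
  | box A => A.predSig
  | _ => ∅

/-- Rename free occurrences of the variable `u` to `v`. -/
def rename : Fml → ℕ → ℕ → Fml
  | pred P args, u, v => pred P (args.map fun x => if x = u then v else x)
  | neg A, u, v => (A.rename u v).neg
  | imp A B, u, v => (A.rename u v).imp (B.rename u v)
  | all w A, u, v => if w = u then all w A else all w (A.rename u v)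
  | box A, u, v => (A.rename u v).box
  | A, _, _ => A

/-- Substitution of a formula for a propositional variable. -/
def psub : Fml → ℕ → Fml → Fml
  | pvar q, p, B => if q = p then B else pvar q
  | neg A, p, B => (A.psub p B).neg
  | imp A C, p, B => (A.psub p B).imp (C.psub p B)
  | all u A, p, B => all u (A.psub p B)
  | box A, p, B => (A.psub p B).box
  | A, _, _ => A

/-- Simultaneous substitution of formulas for all propositional variables. -/
def msub : Fml → (ℕ → Fml) → Fml
  | pvar q, σ => σ q
  | neg A, σ => (A.msub σ).neg
  | imp A C, σ => (A.msub σ).imp (C.msub σ)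
  | all u A, σ => all u (A.msub σ)
  | box A, σ => (A.msub σ).box
  | A, _ => A

/-- Depth-indexed substitution: occurrences of `p` at modal depth `i` are replaced by `σ i`. -/
def dsub : Fml → ℕ → (ℕ → Fml) → Fml
  | pvar q, p, σ => if q = p then σ 0 else pvar q
  | neg A, p, σ => (A.dsub p σ).neg
  | imp A C, p, σ => (A.dsub p σ).imp (C.dsub p σ)
  | all u A, p, σ => all u (A.dsub p σ)
  | box A, p, σ => (A.dsub p (fun i => σ (i + 1))).box
  | A, _, _ => A

/-- `A(p)[B_0,…,B_k]` for a list `[B_0,…,B_k]`. -/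
def dsubL (A : Fml) (p : ℕ) (L : List Fml) : Fml := A.dsub p (fun i => L.getD i verum)

/-- `A^{⊤(n)}`: replace every boxed subformula at modal depth `n` by `⊤`. -/
def eraseT : ℕ → Fml → Fml
  | 0, box _ => verum
  | n + 1, box A => (eraseT n A).box
  | n, neg A => (eraseT n A).neg
  | n, imp A B => (eraseT n A).imp (eraseT n B)
  | n, all u A => all u (eraseT n A)
  | _, A => A

/-- `occursAt p A d`: the propositional variable `p` occurs in `A` at modal depth `d`. -/
def occursAt (p : ℕ) : Fml → ℕ → Prop
  | pvar q, d => q = p ∧ d = 0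
  | neg A, d => occursAt p A d
  | imp A B, d => occursAt p A d ∨ occursAt p B d
  | all _ A, d => occursAt p A d
  | box A, d => ∃ d', d = d' + 1 ∧ occursAt p A d'
  | _, _ => False

/-- `A` is modalized in `p`: no occurrence of `p` at depth `0`. -/
def Modalized (p : ℕ) (A : Fml) : Prop := ¬ occursAt p A 0

/-- Conjunction of a list of formulas. -/
def conj : List Fml → Fml
  | [] => verum
  | A :: L => A.land (conj L)

/-- The canonical fixed-point sequence:
`A_0 := A^{⊤(0)}(p)[⊤]`, `A_{k+1} := A^{⊤(k+1)}(p)[⊤, A_k, …, A_0]`. -/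
def fpSeq (p : ℕ) (A : Fml) : ℕ → Fml
  | 0 => (eraseT 0 A).dsub p (fun _ => verum)
  | n + 1 => (eraseT (n + 1) A).dsub p
      (fun i => match i with
        | 0 => verum
        | j + 1 => fpSeq p A (n - j))
  termination_by k => k
  decreasing_by omega

end Fml

open Fml

/-- Axioms of predicate logic, together with the modal distribution axiom K. -/
inductive Ax : Fml → Prop
  | imp1 (A B : Fml) : Ax (A.imp (B.imp A))
  | imp2 (A B C : Fml) : Ax ((A.imp (B.imp C)).imp ((A.imp B).imp (A.imp C)))
  | contra (A B : Fml) : Ax ((A.neg.imp B.neg).imp (B.imp A))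
  | verum : Ax Fml.verum
  | exfalso (A : Fml) : Ax (Fml.falsum.imp A)
  | negE (A : Fml) : Ax (A.neg.imp (A.imp Fml.falsum))
  | negI (A : Fml) : Ax ((A.imp Fml.falsum).imp A.neg)
  | allE (A : Fml) (u v : ℕ) (h : v ∉ A.bound) : Ax ((Fml.all u A).imp (A.rename u v))
  | allK (A B : Fml) (u : ℕ) :
      Ax ((Fml.all u (A.imp B)).imp ((Fml.all u A).imp (Fml.all u B)))
  | allV (A : Fml) (u : ℕ) (h : u ∉ A.free) : Ax (A.imp (Fml.all u A))
  | k (A B : Fml) : Ax (((A.imp B).box).imp (A.box.imp B.box))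

/-- Hilbert-style provability from the base axioms plus extra axioms `Ext`,
closed under modus ponens, necessitation and generalization. -/
inductive Prf (Ext : Fml → Prop) : Fml → Prop
  | ax {A : Fml} : Ax A → Prf Ext A
  | ext {A : Fml} : Ext A → Prf Ext A
  | mp {A B : Fml} : Prf Ext (A.imp B) → Prf Ext A → Prf Ext B
  | nec {A : Fml} : Prf Ext A → Prf Ext A.box
  | gen {A : Fml} (u : ℕ) : Prf Ext A → Prf Ext (Fml.all u A)

/-- The smallest normal predicate modal logic QK. -/
def QK : Fml → Prop := Prf (fun _ => False)

inductive Ax4 : Fml → Prop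
  | four (A : Fml) : Ax4 (A.box.imp A.box.box)

/-- QK4 : QK plus the axiom 4. -/
def QK4 : Fml → Prop := Prf Ax4

inductive AxL : Fml → Prop
  | lob (A : Fml) : AxL (((A.box.imp A).box).imp A.box)

/-- QGL : QK plus Löb's axiom. -/
def QGL : Fml → Prop := Prf AxL

/-- NQGL : QK4 plus the infinitary rule BL. -/
inductive NQGL : Fml → Prop
  | ax {A : Fml} : Ax A → NQGL A
  | four (A : Fml) : NQGL (A.box.imp A.box.box)
  | mp {A B : Fml} : NQGL (A.imp B) → NQGL A → NQGL B
  | nec {A : Fml} : NQGL A → NQGL A.box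
  | gen {A : Fml} (u : ℕ) : NQGL A → NQGL (Fml.all u A)
  | bl {A : Fml} : (∀ n : ℕ, NQGL ((boxIter (n + 1) Fml.falsum).imp A)) → NQGL A

/-- Σ-formulas. -/
inductive IsSigma : Fml → Prop
  | box (A : Fml) : IsSigma A.box
  | lor {A B : Fml} : IsSigma A → IsSigma B → IsSigma (A.lor B)
  | land {A B : Fml} : IsSigma A → IsSigma B → IsSigma (A.land B)
  | ex {A : Fml} (u : ℕ) : IsSigma A → IsSigma (Fml.ex u A)

/- ## Kripke semantics -/

structure KFrame where
  W : Type
  R : W → W → Prop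
  Dom : Type
  D : W → Set Dom
  Dne : ∀ w, (D w).Nonempty
  mono : ∀ {w w'}, R w w' → D w ⊆ D w'

structure KModel extends KFrame where
  I : W → ℕ → List Dom → Prop
  V : W → ℕ → Prop

def Sat (M : KModel) : Fml → M.W → (ℕ → M.Dom) → Prop
  | .verum, _, _ => True
  | .falsum, _, _ => False
  | .pvar q, w, _ => M.V w q
  | .pred P args, w, ρ => M.I w P (args.map ρ)
  | .neg A, w, ρ => ¬ Sat M A w ρ
  | .imp A B, w, ρ => Sat M A w ρ → Sat M B w ρ
  | .all u A, w, ρ => ∀ a ∈ M.D w, Sat M A w (Function.update ρ u a)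
  | .box A, w, ρ => ∀ v, M.R w v → Sat M A v ρ

/-- Validity in a model. -/
def MVal (M : KModel) (A : Fml) : Prop :=
  ∀ (w : M.W) (ρ : ℕ → M.Dom), (∀ x, ρ x ∈ M.D w) → Sat M A w ρ

/-- Validity on a frame. -/
def FVal (F : KFrame) (A : Fml) : Prop :=
  ∀ (I : F.W → ℕ → List F.Dom → Prop) (V : F.W → ℕ → Prop),
    MVal { toKFrame := F, I := I, V := V } A

/-- Smoryński's model. -/
def MS : KModel where
  W := ℕ
  R := fun m n => n < m
  Dom := ℕ
  D := fun n => {m | n ≤ m}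
  Dne := fun n => ⟨n, le_refl n⟩
  mono := by intro w w' h x hx; simp only [Set.mem_setOf_eq] at *; omega
  I := fun w P L => P = 0 ∧ ∀ m ∈ L, m ≠ w + 1
  V := fun _ _ => False

/-- The finite truncations of Smoryński's model. -/
def Mk (k : ℕ) : KModel where
  W := Fin (k + 1)
  R := fun m n => (n : ℕ) < (m : ℕ)
  Dom := ℕ
  D := fun n => {m | (n : ℕ) ≤ m ∧ m ≤ k + 2}
  Dne := fun n => ⟨(n : ℕ), by simp only [Set.mem_setOf_eq]; have := n.isLt; omega⟩
  mono := by intro w w' h x hx; simp only [Set.mem_setOf_eq] at *; omega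
  I := fun w P L => P = 0 ∧ ∀ m ∈ L, m ≠ (w : ℕ) + 1
  V := fun _ _ => False

/-- `A` contains only the unary predicate symbol `P` (coded `0`) and no propositional variables. -/
def OnlyP (A : Fml) : Prop := A.predSig ⊆ {(0, 1)} ∧ A.pvars = ∅

/-- The atomic formula `P(u)`. -/
def Pat (u : ℕ) : Fml := Fml.pred 0 [u]

/-- `h(F) ≤ n`: there is no chain of `n+1` successive `R`-steps. -/
def HeightLe (F : KFrame) (n : ℕ) : Prop :=
  ∀ c : ℕ → F.W, ¬ ∀ i < n + 1, F.R (c i) (c (i + 1))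

end PML

namespace PML
open Fml

variable {E : Fml → Prop}

/-- Provability from a list of hypotheses (propositional reasoning only). -/
inductive PrfH (E : Fml → Prop) : List Fml → Fml → Prop
  | prf {Γ A} : Prf E A → PrfH E Γ A
  | hyp {Γ A} : A ∈ Γ → PrfH E Γ A
  | mp {Γ A B} : PrfH E Γ (A.imp B) → PrfH E Γ A → PrfH E Γ B

theorem Prf.id (A : Fml) : Prf E (A.imp A) :=
  ((Prf.ax (Ax.imp2 A (A.imp A) A)).mp (Prf.ax (Ax.imp1 A (A.imp A)))).mp
    (Prf.ax (Ax.imp1 A A))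

theorem PrfH.ded {Δ : List Fml} {A : Fml} (h : PrfH E Δ A) :
    ∀ {C : Fml} {Γ : List Fml}, Δ = C :: Γ → PrfH E Γ (C.imp A) := by
  induction h with
  | prf h => intro C Γ _; exact .prf ((Prf.ax (Ax.imp1 _ _)).mp h)
  | hyp h =>
    intro C Γ hΔ
    subst hΔ
    rcases List.mem_cons.1 h with rfl | h
    · exact .prf (Prf.id _)
    · exact .mp (.prf (Prf.ax (Ax.imp1 _ _))) (.hyp h)
  | mp _ _ ih1 ih2 =>
    intro C Γ hΔ
    exact .mp (.mp (.prf (Prf.ax (Ax.imp2 _ _ _))) (ih1 hΔ)) (ih2 hΔ)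

theorem PrfH.toPrf {Γ : List Fml} {A : Fml} (h : PrfH E Γ A) (hΓ : Γ = []) : Prf E A := by
  induction h with
  | prf h => exact h
  | hyp h => subst hΓ; simp at h
  | mp _ _ ih1 ih2 => exact ih1.mp ih2

theorem Prf.const {A B : Fml} (h : Prf E B) : Prf E (A.imp B) :=
  (Prf.ax (Ax.imp1 B A)).mp h

theorem Prf.syl {A B C : Fml} (h1 : Prf E (A.imp B)) (h2 : Prf E (B.imp C)) :
    Prf E (A.imp C) :=
  (PrfH.ded (.mp (.prf h2) (.mp (.prf h1) (.hyp (by simp)))) rfl).toPrf rfl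

theorem Prf.mp2 {A B C : Fml} (h1 : Prf E (C.imp (A.imp B))) (h2 : Prf E (C.imp A)) :
    Prf E (C.imp B) :=
  ((Prf.ax (Ax.imp2 C A B)).mp h1).mp h2

theorem Prf.contrapos (A B : Fml) : Prf E ((A.imp B).imp (B.neg.imp A.neg)) := by
  have hB : PrfH E [A, B.neg, A.imp B] B :=
    .mp (.hyp (by simp)) (.hyp (A := A) (by simp))
  have hBf : PrfH E [A, B.neg, A.imp B] (B.imp Fml.falsum) :=
    .mp (.prf (Prf.ax (Ax.negE B))) (.hyp (A := B.neg) (by simp))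
  have q : PrfH E [A, B.neg, A.imp B] Fml.falsum := .mp hBf hB
  have q2 : PrfH E [B.neg, A.imp B] A.neg :=
    .mp (.prf (Prf.ax (Ax.negI A))) (q.ded rfl)
  exact ((q2.ded rfl).ded rfl).toPrf rfl

theorem Prf.landIntro (P Q : Fml) : Prf E (P.imp (Q.imp (P.land Q))) := by
  have hnQ : PrfH E [P.imp Q.neg, Q, P] Q.neg :=
    .mp (.hyp (A := P.imp Q.neg) (by simp)) (.hyp (A := P) (by simp))
  have q : PrfH E [P.imp Q.neg, Q, P] Fml.falsum :=
    .mp (.mp (.prf (Prf.ax (Ax.negE Q))) hnQ) (.hyp (A := Q) (by simp))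
  have q2 : PrfH E [Q, P] (P.imp Q.neg).neg :=
    .mp (.prf (Prf.ax (Ax.negI _))) (q.ded rfl)
  exact ((q2.ded rfl).ded rfl).toPrf rfl

theorem Prf.landI2 {C P Q : Fml} (h1 : Prf E (C.imp P)) (h2 : Prf E (C.imp Q)) :
    Prf E (C.imp (P.land Q)) :=
  Prf.mp2 (h1.syl (Prf.landIntro P Q)) h2

theorem Prf.impCong {C A A' B B' : Fml} (h1 : Prf E (C.imp (A'.imp A)))
    (h2 : Prf E (C.imp (B.imp B'))) : Prf E (C.imp ((A.imp B).imp (A'.imp B'))) := by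
  have hC : PrfH E [A', A.imp B, C] C := .hyp (by simp)
  have hA : PrfH E [A', A.imp B, C] A :=
    .mp (.mp (.prf h1) hC) (.hyp (A := A') (by simp))
  have hB : PrfH E [A', A.imp B, C] B := .mp (.hyp (A := A.imp B) (by simp)) hA
  have q : PrfH E [A', A.imp B, C] B' := .mp (.mp (.prf h2) hC) hB
  exact (((q.ded rfl).ded rfl).ded rfl).toPrf rfl

@[simp] theorem eraseT_verum (n : ℕ) : eraseT n Fml.verum = Fml.verum := by cases n <;> rfl
@[simp] theorem eraseT_falsum (n : ℕ) : eraseT n Fml.falsum = Fml.falsum := by cases n <;> rfl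
@[simp] theorem eraseT_pvar (n q : ℕ) : eraseT n (Fml.pvar q) = Fml.pvar q := by cases n <;> rfl
@[simp] theorem eraseT_pred (n P : ℕ) (args : List ℕ) :
    eraseT n (Fml.pred P args) = Fml.pred P args := by cases n <;> rfl
@[simp] theorem eraseT_neg (n : ℕ) (A : Fml) :
    eraseT n (Fml.neg A) = (eraseT n A).neg := by cases n <;> rfl
@[simp] theorem eraseT_imp (n : ℕ) (A B : Fml) :
    eraseT n (Fml.imp A B) = (eraseT n A).imp (eraseT n B) := by cases n <;> rfl
@[simp] theorem eraseT_all (n u : ℕ) (A : Fml) :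
    eraseT n (Fml.all u A) = Fml.all u (eraseT n A) := by cases n <;> rfl
theorem eraseT_box_zero (A : Fml) : eraseT 0 (Fml.box A) = Fml.verum := rfl
theorem eraseT_box_succ (n : ℕ) (A : Fml) :
    eraseT (n + 1) (Fml.box A) = (eraseT n A).box := rfl

theorem boxIter_falsum_free (k : ℕ) : (boxIter k Fml.falsum).free = ∅ := by
  induction k with
  | zero => rfl
  | succ k ih => simpa [boxIter, Fml.free] using ih

theorem allCong {C A A' : Fml} {u : ℕ} (hfree : u ∉ C.free)
    (h : Prf E (C.imp (A.imp A'))) : Prf E (C.imp ((Fml.all u A).imp (Fml.all u A'))) := by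
  have s2 : Prf E ((Fml.all u C).imp (Fml.all u (A.imp A'))) :=
    (Prf.ax (Ax.allK C (A.imp A') u)).mp (Prf.gen u h)
  have s4 : Prf E (C.imp (Fml.all u (A.imp A'))) :=
    (Prf.ax (Ax.allV C u hfree)).syl s2
  exact s4.syl (Prf.ax (Ax.allK A A' u))

theorem boxCong {C A A' : Fml} (h : Prf E (C.imp (A.imp A'))) :
    Prf E (C.box.imp (A.box.imp A'.box)) :=
  ((Prf.ax (Ax.k C (A.imp A'))).mp (Prf.nec h)).syl (Prf.ax (Ax.k A A'))

theorem stmt0_main (A : Fml) : ∀ n : ℕ,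
    QK ((boxIter (n + 1) Fml.falsum).imp (A.imp (eraseT n A))) ∧
    QK ((boxIter (n + 1) Fml.falsum).imp ((eraseT n A).imp A)) := by
  induction A with
  | verum => intro n; simp only [eraseT_verum]; exact ⟨Prf.const (Prf.id _), Prf.const (Prf.id _)⟩
  | falsum => intro n; simp only [eraseT_falsum]; exact ⟨Prf.const (Prf.id _), Prf.const (Prf.id _)⟩
  | pvar q => intro n; simp only [eraseT_pvar]; exact ⟨Prf.const (Prf.id _), Prf.const (Prf.id _)⟩
  | pred P args =>
    intro n; simp only [eraseT_pred]; exact ⟨Prf.const (Prf.id _), Prf.const (Prf.id _)⟩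
  | neg A ih =>
    intro n
    simp only [eraseT_neg]
    exact ⟨(ih n).2.syl (Prf.contrapos _ _), (ih n).1.syl (Prf.contrapos _ _)⟩
  | imp A B ihA ihB =>
    intro n
    simp only [eraseT_imp]
    exact ⟨Prf.impCong (ihA n).2 (ihB n).1, Prf.impCong (ihA n).1 (ihB n).2⟩
  | all u A ih =>
    intro n
    have hfree : u ∉ (boxIter (n + 1) Fml.falsum).free := by
      rw [boxIter_falsum_free]; simp
    simp only [eraseT_all]
    exact ⟨allCong hfree (ih n).1, allCong hfree (ih n).2⟩
  | box A ih =>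
    intro n
    cases n with
    | zero =>
      constructor
      · exact Prf.const (Prf.const (Prf.ax Ax.verum))
      · have h2 : QK ((Fml.falsum.box).imp A.box) :=
          (Prf.ax (Ax.k Fml.falsum A)).mp (Prf.nec (Prf.ax (Ax.exfalso A)))
        exact h2.syl (Prf.ax (Ax.imp1 A.box Fml.verum))
    | succ k =>
      exact ⟨boxCong (ih k).1, boxCong (ih k).2⟩

end PML

open PML PML.Fml in
/-- For any n and any formula A of predicate modal logic (an L-formula, i.e. with
no propositional variables), QK proves □^{n+1}⊥ → (A ↔ A^{⊤(n)}). -/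
theorem stmt0 (n : ℕ) (A : Fml) (hA : A.pvars = ∅) :
    QK ((boxIter (n + 1) Fml.falsum).imp (A.iff (eraseT n A))) :=
  Prf.landI2 (stmt0_main A n).1 (stmt0_main A n).2
end

section
/- Let A(p) be a formula of predicate modal logic with a propositional variable p that contains only occurrences of p at modal depth ≤ n, and let C_0,…,C_n and D_0,…,D_n be formulas containing no free variables bound in A(p). Then QK proves: □^{n+1}⊥ ∧ ⋀_{i≤n} □^{n-i}(□^{i+1}⊥ → (C_i ↔ D_i)) → (A(p)[C_n,…,C_0] ↔ A(p)[D_n,…,D_0]), where A(p)[B_0,…,B_n] denotes the result of substituting B_i for all occurrences of p of depth i, for each i ≤ n. -/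
namespace PML

open Fml

section Stmt1Aux
open Fml

/- ### Basic combinators -/

private theorem qax {A : Fml} (h : Ax A) : QK A := Prf.ax h
private theorem qmp {A B : Fml} (h1 : QK (A.imp B)) (h2 : QK A) : QK B := Prf.mp h1 h2

/-- `H → B` from `H → (A → B)` and `H → A`. -/
private theorem dd {H A B : Fml} (h1 : QK (H.imp (A.imp B))) (h2 : QK (H.imp A)) :
    QK (H.imp B) := qmp (qmp (qax (Ax.imp2 H A B)) h1) h2

private theorem dthm {H A : Fml} (h : QK A) : QK (H.imp A) := qmp (qax (Ax.imp1 A H)) h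

private theorem idd (A : Fml) : QK (A.imp A) :=
  qmp (qmp (qax (Ax.imp2 A (A.imp A) A)) (qax (Ax.imp1 A (A.imp A)))) (qax (Ax.imp1 A A))

/-- Lift an implication under an antecedent. -/
private theorem dlift {C X W : Fml} (h : QK (X.imp W)) : QK ((C.imp X).imp (C.imp W)) :=
  qmp (qax (Ax.imp2 C X W)) (qmp (qax (Ax.imp1 (X.imp W) C)) h)

/-- Composition of proved implications. -/
private theorem comp {A B C : Fml} (h1 : QK (A.imp B)) (h2 : QK (B.imp C)) :
    QK (A.imp C) := dd (dthm h2) h1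

private theorem swapMeta {A B C : Fml} (h : QK (A.imp (B.imp C))) : QK (B.imp (A.imp C)) :=
  comp (qax (Ax.imp1 B A)) (qmp (qax (Ax.imp2 A B C)) h)

/-- The B combinator. -/
private theorem bObj (X Y Z : Fml) : QK ((Y.imp Z).imp ((X.imp Y).imp (X.imp Z))) :=
  comp (qax (Ax.imp1 (Y.imp Z) X)) (qax (Ax.imp2 X Y Z))

/-- Composition under a hypothesis. -/
private theorem dcomp {H X Y Z : Fml} (h1 : QK (H.imp (X.imp Y))) (h2 : QK (H.imp (Y.imp Z))) :
    QK (H.imp (X.imp Z)) := dd (dd (dthm (bObj X Y Z)) h2) h1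

/-- Exchange, object level. -/
private theorem exchObj (P Q R : Fml) :
    QK ((P.imp (Q.imp R)).imp (Q.imp (P.imp R))) :=
  dcomp (dthm (qax (Ax.imp1 Q P))) (qax (Ax.imp2 P Q R))

/- ### A context machinery -/

private def imps : List Fml → Fml → Fml
  | [], A => A
  | B :: Γ, A => B.imp (imps Γ A)

private def Prv (Γ : List Fml) (A : Fml) : Prop := QK (imps Γ A)

private theorem Prv.thm {Γ : List Fml} {A : Fml} (h : QK A) : Prv Γ A := by
  induction Γ with
  | nil => exact h
  | cons B Γ ih => exact dthm ih

private theorem impsK (Γ : List Fml) (A B : Fml) :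
    QK ((imps Γ (A.imp B)).imp ((imps Γ A).imp (imps Γ B))) := by
  induction Γ with
  | nil => exact idd _
  | cons C Γ ih =>
      exact comp (dlift ih) (qax (Ax.imp2 C (imps Γ A) (imps Γ B)))

private theorem Prv.mp {Γ : List Fml} {A B : Fml} (h1 : Prv Γ (A.imp B)) (h2 : Prv Γ A) :
    Prv Γ B := qmp (qmp (impsK Γ A B) h1) h2

private theorem impsExch (Γ : List Fml) (A B : Fml) :
    QK ((A.imp (imps Γ B)).imp (imps Γ (A.imp B))) := by
  induction Γ with
  | nil => exact idd _
  | cons C Γ ih =>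
      exact comp (exchObj A C (imps Γ B)) (dlift ih)

private theorem Prv.intro {Γ : List Fml} {A B : Fml} (h : Prv (A :: Γ) B) :
    Prv Γ (A.imp B) := qmp (impsExch Γ A B) h

private theorem Prv.hyp0 {Γ : List Fml} {A : Fml} : Prv (A :: Γ) A := by
  show QK (A.imp (imps Γ A))
  induction Γ with
  | nil => exact idd A
  | cons C Γ ih => exact comp ih (qax (Ax.imp1 (imps Γ A) C))

private theorem Prv.wk {Γ : List Fml} {A B : Fml} (h : Prv Γ B) : Prv (A :: Γ) B :=
  dthm h

private theorem Prv.hyp {Γ : List Fml} {A : Fml} (h : A ∈ Γ) : Prv Γ A := by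
  induction Γ with
  | nil => cases h
  | cons C Γ ih =>
      rcases List.mem_cons.1 h with h | h
      · subst h; exact Prv.hyp0
      · exact Prv.wk (ih h)

/- ### Propositional theorems -/

private theorem dni (A : Fml) : QK (A.imp A.neg.neg) :=
  comp (swapMeta (qax (Ax.negE A))) (qax (Ax.negI A.neg))

private theorem contrapose (A B : Fml) : QK ((A.imp B).imp (B.neg.imp A.neg)) := by
  show Prv [] _
  refine Prv.intro (Prv.intro ?_)
  refine Prv.mp (Prv.thm (qax (Ax.negI A))) (Prv.intro ?_)
  have hB : Prv [A, B.neg, A.imp B] B :=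
    Prv.mp (Prv.wk (Prv.wk Prv.hyp0)) Prv.hyp0
  exact Prv.mp (Prv.mp (Prv.thm (qax (Ax.negE B))) (Prv.wk Prv.hyp0)) hB

private theorem andI (A B : Fml) : QK (A.imp (B.imp (A.land B))) := by
  show Prv [] _
  refine Prv.intro (Prv.intro ?_)
  refine Prv.mp (Prv.thm (qax (Ax.negI (A.imp B.neg)))) (Prv.intro ?_)
  have hnB : Prv [A.imp B.neg, B, A] B.neg :=
    Prv.mp Prv.hyp0 (Prv.wk (Prv.wk Prv.hyp0))
  exact Prv.mp (Prv.mp (Prv.thm (qax (Ax.negE B))) hnB) (Prv.wk Prv.hyp0)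

private theorem andE1 (A B : Fml) : QK ((A.land B).imp A) := by
  refine qmp (qax (Ax.contra A (A.land B))) ?_
  show Prv [] _
  refine Prv.intro ?_
  refine Prv.mp (Prv.thm (dni (A.imp B.neg))) (Prv.intro ?_)
  have hbot : Prv [A, A.neg] Fml.falsum :=
    Prv.mp (Prv.mp (Prv.thm (qax (Ax.negE A))) (Prv.wk Prv.hyp0)) Prv.hyp0
  exact Prv.mp (Prv.thm (qax (Ax.exfalso B.neg))) hbot

private theorem andE2 (A B : Fml) : QK ((A.land B).imp B) := by
  refine qmp (qax (Ax.contra B (A.land B))) ?_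
  show Prv [] _
  refine Prv.intro ?_
  exact Prv.mp (Prv.thm (dni (A.imp B.neg)))
    (Prv.mp (Prv.thm (qax (Ax.imp1 B.neg A))) Prv.hyp0)

/-- Introduce an iff under a hypothesis. -/
private theorem diffI {H X Y : Fml} (h1 : QK (H.imp (X.imp Y))) (h2 : QK (H.imp (Y.imp X))) :
    QK (H.imp (X.iff Y)) := dd (dd (dthm (andI (X.imp Y) (Y.imp X))) h1) h2

private theorem iffRefl (A : Fml) : QK (A.iff A) :=
  qmp (qmp (andI (A.imp A) (A.imp A)) (idd A)) (idd A)

private theorem negCongThm (A B : Fml) : QK ((A.iff B).imp (A.neg.iff B.neg)) := by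
  refine diffI ?_ ?_
  · exact (Prv.mp (Prv.thm (contrapose B A))
      (Prv.mp (Prv.thm (andE2 (A.imp B) (B.imp A))) Prv.hyp0) : Prv [A.iff B] _)
  · exact (Prv.mp (Prv.thm (contrapose A B))
      (Prv.mp (Prv.thm (andE1 (A.imp B) (B.imp A))) Prv.hyp0) : Prv [A.iff B] _)

private theorem iffE1 {Γ : List Fml} {A B : Fml} (h : Prv Γ (A.iff B)) : Prv Γ (A.imp B) :=
  Prv.mp (Prv.thm (andE1 (A.imp B) (B.imp A))) h

private theorem iffE2 {Γ : List Fml} {A B : Fml} (h : Prv Γ (A.iff B)) : Prv Γ (B.imp A) :=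
  Prv.mp (Prv.thm (andE2 (A.imp B) (B.imp A))) h

private theorem impCongThm (A B A' B' : Fml) :
    QK ((A.iff B).imp ((A'.iff B').imp ((A.imp A').iff (B.imp B')))) := by
  show Prv [] _
  refine Prv.intro (Prv.intro ?_)
  have h12 : Prv [A'.iff B', A.iff B] ((A.imp A').imp (B.imp B')) := by
    refine Prv.intro (Prv.intro ?_)
    have hA : Prv [B, A.imp A', A'.iff B', A.iff B] A :=
      Prv.mp (iffE2 (Prv.wk (Prv.wk (Prv.wk Prv.hyp0)))) Prv.hyp0
    have hA' := Prv.mp (Prv.wk Prv.hyp0) hA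
    exact Prv.mp (iffE1 (Prv.wk (Prv.wk Prv.hyp0))) hA'
  have h21 : Prv [A'.iff B', A.iff B] ((B.imp B').imp (A.imp A')) := by
    refine Prv.intro (Prv.intro ?_)
    have hB : Prv [A, B.imp B', A'.iff B', A.iff B] B :=
      Prv.mp (iffE1 (Prv.wk (Prv.wk (Prv.wk Prv.hyp0)))) Prv.hyp0
    have hB' := Prv.mp (Prv.wk Prv.hyp0) hB
    exact Prv.mp (iffE2 (Prv.wk (Prv.wk Prv.hyp0))) hB'
  exact Prv.mp (Prv.mp (Prv.thm (andI _ _)) h12) h21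

/- ### Modal lemmas -/

private theorem boxMono {A B : Fml} (h : QK (A.imp B)) : QK (A.box.imp B.box) :=
  qmp (qax (Ax.k A B)) (Prf.nec h)

private theorem boxAnd (A B : Fml) : QK (A.box.imp (B.box.imp ((A.land B).box))) :=
  comp (boxMono (andI A B)) (qax (Ax.k B (A.land B)))

private theorem boxIffDist (A B : Fml) : QK ((A.iff B).box.imp (A.box.iff B.box)) := by
  refine diffI ?_ ?_
  · exact comp (boxMono (andE1 (A.imp B) (B.imp A))) (qax (Ax.k A B))
  · exact comp (boxMono (andE2 (A.imp B) (B.imp A))) (qax (Ax.k B A))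

private theorem conjBox (L : List Fml) : QK ((conj (L.map Fml.box)).imp (conj L).box) := by
  induction L with
  | nil => exact dthm (Prf.nec (qax Ax.verum))
  | cons a L ih =>
      show QK ((a.box.land (conj (L.map Fml.box))).imp ((a.land (conj L)).box))
      refine dd (dd (dthm (boxAnd a (conj L))) (andE1 _ _)) ?_
      exact comp (andE2 _ _) ih

private theorem conj_init (M : List Fml) (g : Fml) :
    QK ((conj (M ++ [g])).imp (conj M)) := by
  induction M with
  | nil => exact dthm (qax Ax.verum)
  | cons a M ih =>
      show QK ((a.land (conj (M ++ [g]))).imp (a.land (conj M)))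
      exact dd (dd (dthm (andI _ _)) (andE1 _ _)) (comp (andE2 _ _) ih)

private theorem conj_mem {L : List Fml} {g : Fml} (h : g ∈ L) : QK ((conj L).imp g) := by
  induction L with
  | nil => cases h
  | cons a L ih =>
      rcases List.mem_cons.1 h with h | h
      · subst h; exact andE1 _ _
      · exact comp (andE2 a (conj L)) (ih h)

/- ### The hypothesis formulas -/

/-- The auxiliary implication `□^{i+1}⊥ → (C_i ↔ D_i)`. -/
private def hG (C D : ℕ → Fml) (i : ℕ) : Fml :=
  (boxIter (i + 1) Fml.falsum).imp ((C i).iff (D i))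

/-- The hypothesis available at modal depth `k`. -/
private def Hk (n : ℕ) (C D : ℕ → Fml) (k : ℕ) : Fml :=
  (boxIter (n + 1 - k) Fml.falsum).land
    (conj ((List.range (n + 1 - k)).map (fun i => boxIter (n - k - i) (hG C D i))))

private theorem HkFalse {n k : ℕ} {C D : ℕ → Fml} (hk : n < k) (X : Fml) :
    QK ((Hk n C D k).imp X) := by
  have h1 : n + 1 - k = 0 := by omega
  show QK (((boxIter (n + 1 - k) Fml.falsum).land _).imp X)
  rw [h1]
  exact comp (andE1 _ _) (qax (Ax.exfalso X))

private theorem HkStep (n : ℕ) (C D : ℕ → Fml) (k : ℕ) :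
    QK ((Hk n C D k).imp (Hk n C D (k + 1)).box) := by
  rcases le_or_gt k n with hk | hk
  · set m := n - k with hm
    have e1 : n + 1 - k = m + 1 := by omega
    have e2 : n + 1 - (k + 1) = m := by omega
    have elist : (List.range (n + 1 - k)).map (fun i => boxIter (n - k - i) (hG C D i)) =
        (((List.range m).map (fun i => boxIter (n - (k + 1) - i) (hG C D i))).map Fml.box)
          ++ [hG C D m] := by
      rw [e1, List.range_succ, List.map_append, List.map_map]
      congr 1
      · refine List.map_congr_left (fun i hi => ?_)
        have hi' : i < m := List.mem_range.1 hi
        have : n - k - i = (n - (k + 1) - i) + 1 := by omega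
        rw [this]; rfl
      · have h0 : n - k - m = 0 := by omega
        simp only [List.map_cons, List.map_nil, h0]
        rfl
    have hHk : Hk n C D k = (boxIter m Fml.falsum).box.land
        (conj ((((List.range m).map (fun i => boxIter (n - (k + 1) - i) (hG C D i))).map Fml.box)
          ++ [hG C D m])) := by
      rw [Hk, elist, e1]; rfl
    rw [hHk]
    have hHk1 : Hk n C D (k + 1) = (boxIter m Fml.falsum).land
        (conj ((List.range m).map (fun i => boxIter (n - (k + 1) - i) (hG C D i)))) := by
      rw [Hk, e2]
    rw [hHk1]
    refine dd (dd (dthm (boxAnd _ _)) (andE1 _ _)) ?_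
    exact comp (andE2 _ _) (comp (conj_init _ _) (conjBox _))
  · exact HkFalse hk _

private theorem HkPvar {n k : ℕ} (C D : ℕ → Fml) (hk : k ≤ n) :
    QK ((Hk n C D k).imp ((C (n - k)).iff (D (n - k)))) := by
  set m := n - k with hm
  have e1 : n + 1 - k = m + 1 := by omega
  have hhk : Hk n C D k = (boxIter (m + 1) Fml.falsum).land
      (conj ((List.range (m + 1)).map (fun i => boxIter (n - k - i) (hG C D i)))) := by
    rw [Hk, e1]
  have hmem : hG C D m ∈ (List.range (m + 1)).map (fun i => boxIter (n - k - i) (hG C D i)) := by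
    refine List.mem_map.2 ⟨m, List.mem_range.2 (by omega), ?_⟩
    have h0 : n - k - m = 0 := by omega
    rw [h0]
    rfl
  rw [hhk]
  have h1 := andE1 (boxIter (m + 1) Fml.falsum)
    (conj ((List.range (m + 1)).map (fun i => boxIter (n - k - i) (hG C D i))))
  have h2 := comp (andE2 (boxIter (m + 1) Fml.falsum)
    (conj ((List.range (m + 1)).map (fun i => boxIter (n - k - i) (hG C D i))))) (conj_mem hmem)
  exact dd h2 h1

/- ### Free variables of the hypothesis -/

private theorem free_boxIter (m : ℕ) (X : Fml) : (boxIter m X).free = X.free := by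
  induction m with
  | zero => rfl
  | succ m ih => show (boxIter m X).free = X.free; exact ih

private theorem conj_free_not {u : ℕ} {L : List Fml} (h : ∀ g ∈ L, u ∉ g.free) :
    u ∉ (conj L).free := by
  induction L with
  | nil => simp [conj, Fml.free]
  | cons a L ih =>
      show u ∉ (a.land (conj L)).free
      simp only [Fml.land, Fml.free, Finset.mem_union]
      push_neg
      exact ⟨h a (by simp), ih (fun g hg => h g (by simp [hg]))⟩

private theorem hG_free_not {u i : ℕ} {C D : ℕ → Fml}
    (hc : u ∉ (C i).free) (hd : u ∉ (D i).free) : u ∉ (hG C D i).free := by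
  simp only [hG, Fml.iff, Fml.land, Fml.free, free_boxIter, Finset.mem_union]
  simp [Fml.free, hc, hd]

private theorem Hk_free_not {n k u : ℕ} {C D : ℕ → Fml}
    (h : ∀ i ≤ n, u ∉ (C i).free ∧ u ∉ (D i).free) : u ∉ (Hk n C D k).free := by
  show u ∉ (Fml.land _ _).free
  simp only [Fml.land, Fml.free, Finset.mem_union, free_boxIter]
  intro hmem
  rcases hmem with hmem | hmem
  · simp [Fml.free] at hmem
  · revert hmem
    refine conj_free_not (fun g hg => ?_)
    rcases List.mem_map.1 hg with ⟨i, hi, rfl⟩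
    have hin : i ≤ n := by have := List.mem_range.1 hi; omega
    rw [free_boxIter]
    exact hG_free_not (h i hin).1 (h i hin).2

/- ### The main induction -/

private theorem mainInd (n p : ℕ) (C D : ℕ → Fml) (A : Fml) :
    ∀ k : ℕ, (∀ u ∈ A.bound, ∀ i ≤ n, u ∉ (C i).free ∧ u ∉ (D i).free) →
      QK ((Hk n C D k).imp
        ((A.dsub p (fun i => C (n - (k + i)))).iff (A.dsub p (fun i => D (n - (k + i)))))) := by
  induction A with
  | verum => exact fun k _ => dthm (iffRefl _)
  | falsum => exact fun k _ => dthm (iffRefl _)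
  | pred P args => exact fun k _ => dthm (iffRefl _)
  | pvar q =>
      intro k _
      show QK ((Hk n C D k).imp
        ((if q = p then C (n - (k + 0)) else Fml.pvar q).iff
          (if q = p then D (n - (k + 0)) else Fml.pvar q)))
      by_cases hq : q = p
      · simp only [hq, if_pos rfl]
        rcases le_or_gt k n with hk | hk
        · have := HkPvar (n := n) (k := k) C D hk
          have e : n - (k + 0) = n - k := by omega
          rw [e]; exact this
        · exact HkFalse hk _
      · simp only [if_neg hq]
        exact dthm (iffRefl _)
  | neg B ih =>
      intro k h
      exact comp (ih k h) (negCongThm _ _)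
  | imp B B' ih ih' =>
      intro k h
      have h1 := ih k (fun u hu => h u (by simp [Fml.bound, hu]))
      have h2 := ih' k (fun u hu => h u (by simp [Fml.bound, hu]))
      exact dd (dd (dthm (impCongThm _ _ _ _)) h1) h2
  | all u B ih =>
      intro k h
      have hB := ih k (fun v hv => h v (by simp [Fml.bound, hv]))
      have hu : u ∉ (Hk n C D k).free :=
        Hk_free_not (h u (by simp [Fml.bound]))
      have hav : QK ((Hk n C D k).imp (Fml.all u (Hk n C D k))) := qax (Ax.allV _ u hu)
      set X := B.dsub p (fun i => C (n - (k + i)))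
      set Y := B.dsub p (fun i => D (n - (k + i)))
      have d1 : QK ((Hk n C D k).imp ((Fml.all u X).imp (Fml.all u Y))) := by
        have hxy : QK ((Hk n C D k).imp (X.imp Y)) := comp hB (andE1 _ _)
        have g : QK ((Fml.all u (Hk n C D k)).imp (Fml.all u (X.imp Y))) :=
          qmp (qax (Ax.allK _ _ u)) (Prf.gen u hxy)
        exact comp hav (comp g (qax (Ax.allK X Y u)))
      have d2 : QK ((Hk n C D k).imp ((Fml.all u Y).imp (Fml.all u X))) := by
        have hyx : QK ((Hk n C D k).imp (Y.imp X)) := comp hB (andE2 _ _)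
        have g : QK ((Fml.all u (Hk n C D k)).imp (Fml.all u (Y.imp X))) :=
          qmp (qax (Ax.allK _ _ u)) (Prf.gen u hyx)
        exact comp hav (comp g (qax (Ax.allK Y X u)))
      exact diffI d1 d2
  | box B ih =>
      intro k h
      have hB := ih (k + 1) h
      have e : (fun i => C (n - (k + (i + 1)))) = (fun i => C (n - (k + 1 + i))) := by
        funext i; congr 1; omega
      have e' : (fun i => D (n - (k + (i + 1)))) = (fun i => D (n - (k + 1 + i))) := by
        funext i; congr 1; omega
      show QK ((Hk n C D k).imp
        (((B.dsub p (fun i => C (n - (k + (i + 1))))).box).iff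
          ((B.dsub p (fun i => D (n - (k + (i + 1))))).box)))
      rw [e, e']
      exact comp (HkStep n C D k) (comp (boxMono hB) (boxIffDist _ _))

end Stmt1Aux

end PML

open PML PML.Fml in
theorem stmt1 (n p : ℕ) (A : Fml) (C D : ℕ → Fml)
    (hdepth : ∀ d, occursAt p A d → d ≤ n)
    (hC : ∀ i ≤ n, (C i).free ∩ A.bound = ∅)
    (hD : ∀ i ≤ n, (D i).free ∩ A.bound = ∅) :
    QK (((boxIter (n + 1) Fml.falsum).land
          (conj ((List.range (n + 1)).map
            (fun i => boxIter (n - i)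
              ((boxIter (i + 1) Fml.falsum).imp ((C i).iff (D i))))))).imp
        ((A.dsub p (fun i => C (n - i))).iff (A.dsub p (fun i => D (n - i))))) := by
  have hCD : ∀ u ∈ A.bound, ∀ i ≤ n, u ∉ (C i).free ∧ u ∉ (D i).free := by
    intro u hu i hi
    constructor
    · intro hf
      have := hC i hi
      have : u ∈ (C i).free ∩ A.bound := Finset.mem_inter.2 ⟨hf, hu⟩
      simp [hC i hi] at this
    · intro hf
      have : u ∈ (D i).free ∩ A.bound := Finset.mem_inter.2 ⟨hf, hu⟩
      simp [hD i hi] at this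
  have h := PML.mainInd n p C D A 0 hCD
  have e1 : (fun i => C (n - (0 + i))) = (fun i => C (n - i)) := by funext i; simp
  have e2 : (fun i => D (n - (0 + i))) = (fun i => D (n - i)) := by funext i; simp
  rw [e1, e2] at h
  have eH : PML.Hk n C D 0 = ((boxIter (n + 1) Fml.falsum).land
      (conj ((List.range (n + 1)).map
        (fun i => boxIter (n - i)
          ((boxIter (i + 1) Fml.falsum).imp ((C i).iff (D i))))))) := by
    simp only [PML.Hk, PML.hG, Nat.sub_zero]
  rw [eH] at h
  exact h
end

section
/- Fixed-point theorem for QK + □^{n+1}⊥: for any natural number n and any formula A(p) of predicate modal logic that is modalized in p (every occurrence of p lies in the scope of □), there exists a formula B, containing only predicate symbols and free variables occurring in A(p) and not containing p, such that QK proves □^{n+1}⊥ → (B ↔ A(B)). Moreover B is effectively computable from A(p). -/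
/-!
Under the hypothesis `□^k⊥` every formula `□^k X` holds, so each `□` of a formula
consumes one box of the hypothesis: if `B ↔ C` holds under `□^k⊥`, then
`A(B) ↔ A(C)` holds under `□^k⊥` for every `A`, and under `□^(k+1)⊥` when `A` is modalized
in `p`. Starting from `⊤`, induction on `k` gives `Aᵏ(⊤) ↔ Aᵏ⁺¹(⊤)` under `□^k⊥`, so
`B := Aⁿ⁺¹(⊤)` is a fixed point of `A` under `□^(n+1)⊥`.
-/

namespace PML
open Fml

variable {Ext : Fml → Prop}

namespace Prf

theorem imp_self (A : Fml) : Prf Ext (A.imp A) :=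
  mp (mp (ax (Ax.imp2 A (A.imp A) A)) (ax (Ax.imp1 A (A.imp A)))) (ax (Ax.imp1 A A))

theorem imp_intro {H A : Fml} (h : Prf Ext A) : Prf Ext (H.imp A) :=
  mp (ax (Ax.imp1 A H)) h

theorem mp_imp {H A B : Fml} (h₁ : Prf Ext (H.imp (A.imp B))) (h₂ : Prf Ext (H.imp A)) :
    Prf Ext (H.imp B) :=
  mp (mp (ax (Ax.imp2 H A B)) h₁) h₂

theorem imp_trans {A B C : Fml} (h₁ : Prf Ext (A.imp B)) (h₂ : Prf Ext (B.imp C)) :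
    Prf Ext (A.imp C) :=
  mp_imp (imp_intro h₂) h₁

end Prf

/-- Hypotheses are closed under modus ponens only, so the deduction theorem holds. -/
inductive PrfFrom (Ext : Fml → Prop) : List Fml → Fml → Prop
  | thm {Γ : List Fml} {A : Fml} : Prf Ext A → PrfFrom Ext Γ A
  | hyp {Γ : List Fml} {A : Fml} : A ∈ Γ → PrfFrom Ext Γ A
  | mp {Γ : List Fml} {A B : Fml} :
      PrfFrom Ext Γ (A.imp B) → PrfFrom Ext Γ A → PrfFrom Ext Γ B

namespace PrfFrom

theorem deduction {A B : Fml} {Γ : List Fml} (h : PrfFrom Ext (A :: Γ) B) :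
    PrfFrom Ext Γ (A.imp B) := by
  generalize hΔ : A :: Γ = Δ at h
  induction h with
  | thm h => exact thm (Prf.imp_intro h)
  | @hyp X hX =>
    subst hΔ
    rcases List.mem_cons.mp hX with rfl | hX
    · exact thm (Prf.imp_self _)
    · exact mp (thm (Prf.ax (Ax.imp1 _ _))) (hyp hX)
  | mp _ _ ih₁ ih₂ => exact mp (mp (thm (Prf.ax (Ax.imp2 _ _ _))) ih₁) ih₂

theorem toPrf {A : Fml} (h : PrfFrom Ext [] A) : Prf Ext A := by
  generalize hΓ : ([] : List Fml) = Γ at h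
  induction h with
  | thm h => exact h
  | hyp hA => subst hΓ; simp at hA
  | mp _ _ ih₁ ih₂ => exact Prf.mp ih₁ ih₂

theorem absurd {Γ : List Fml} {X : Fml} (h₁ : PrfFrom Ext Γ X.neg) (h₂ : PrfFrom Ext Γ X) :
    PrfFrom Ext Γ falsum :=
  mp (mp (thm (Prf.ax (Ax.negE X))) h₁) h₂

theorem negIntro {Γ : List Fml} {X : Fml} (h : PrfFrom Ext (X :: Γ) falsum) :
    PrfFrom Ext Γ X.neg :=
  mp (thm (Prf.ax (Ax.negI X))) h.deduction

end PrfFrom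

theorem Prf.contrapose (X Y : Fml) : Prf Ext ((X.imp Y).imp (Y.neg.imp X.neg)) :=
  PrfFrom.toPrf <| .deduction <| .deduction <| .negIntro <|
    .absurd (X := Y) (.hyp (by simp)) (.mp (A := X) (.hyp (by simp)) (.hyp (by simp)))

theorem Prf.imp_congr_taut (X Y X' Y' : Fml) :
    Prf Ext ((Y.imp X).imp ((X'.imp Y').imp ((X.imp X').imp (Y.imp Y')))) :=
  PrfFrom.toPrf <| .deduction <| .deduction <| .deduction <| .deduction <|
    .mp (A := X') (.hyp (by simp)) <| .mp (A := X) (.hyp (by simp)) <|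
      .mp (A := Y) (.hyp (by simp)) (.hyp (by simp))

theorem Prf.land_intro (P Q : Fml) : Prf Ext (P.imp (Q.imp (P.land Q))) :=
  PrfFrom.toPrf <| .deduction <| .deduction <| .negIntro <|
    .absurd (X := Q) (.mp (A := P) (.hyp (by simp)) (.hyp (by simp))) (.hyp (by simp))

theorem Prf.box_mono {X Y : Fml} (h : Prf Ext (X.imp Y)) : Prf Ext (X.box.imp Y.box) :=
  Prf.mp (Prf.ax (Ax.k X Y)) (Prf.nec h)

theorem free_boxIter_falsum (m : ℕ) : (boxIter m falsum).free = ∅ := by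
  induction m with
  | zero => rfl
  | succ m ih => exact ih

theorem Prf.boxIter_falsum_succ (m : ℕ) :
    Prf Ext ((boxIter m falsum).imp (boxIter (m + 1) falsum)) := by
  induction m with
  | zero => exact Prf.ax (Ax.exfalso _)
  | succ m ih => exact Prf.box_mono ih

def EquivUnder (Ext : Fml → Prop) (H B C : Fml) : Prop :=
  Prf Ext (H.imp (B.imp C)) ∧ Prf Ext (H.imp (C.imp B))

namespace EquivUnder

variable {H B C B' C' : Fml}

theorem refl (H B : Fml) : EquivUnder Ext H B B :=
  ⟨Prf.imp_intro (Prf.imp_self B), Prf.imp_intro (Prf.imp_self B)⟩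

theorem of_falsum (B C : Fml) : EquivUnder Ext falsum B C :=
  ⟨Prf.ax (Ax.exfalso _), Prf.ax (Ax.exfalso _)⟩

theorem of_imp {H' : Fml} (hH : Prf Ext (H'.imp H)) (h : EquivUnder Ext H B C) :
    EquivUnder Ext H' B C :=
  ⟨Prf.imp_trans hH h.1, Prf.imp_trans hH h.2⟩

theorem neg (h : EquivUnder Ext H B C) : EquivUnder Ext H B.neg C.neg :=
  ⟨Prf.mp_imp (Prf.imp_intro (Prf.contrapose _ _)) h.2,
    Prf.mp_imp (Prf.imp_intro (Prf.contrapose _ _)) h.1⟩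

theorem imp (h : EquivUnder Ext H B C) (h' : EquivUnder Ext H B' C') :
    EquivUnder Ext H (B.imp B') (C.imp C') :=
  ⟨Prf.mp_imp (Prf.mp_imp (Prf.imp_intro (Prf.imp_congr_taut _ _ _ _)) h.2) h'.1,
    Prf.mp_imp (Prf.mp_imp (Prf.imp_intro (Prf.imp_congr_taut _ _ _ _)) h.1) h'.2⟩

theorem all (u : ℕ) (hu : u ∉ H.free) (h : EquivUnder Ext H B C) :
    EquivUnder Ext H (Fml.all u B) (Fml.all u C) := by
  have key : ∀ {X Y : Fml}, Prf Ext (H.imp (X.imp Y)) →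
      Prf Ext (H.imp ((Fml.all u X).imp (Fml.all u Y))) := fun hXY =>
    Prf.imp_trans (Prf.imp_trans (Prf.ax (Ax.allV H u hu))
      (Prf.mp (Prf.ax (Ax.allK _ _ u)) (Prf.gen u hXY))) (Prf.ax (Ax.allK _ _ u))
  exact ⟨key h.1, key h.2⟩

theorem box (h : EquivUnder Ext H B C) : EquivUnder Ext H.box B.box C.box :=
  ⟨Prf.imp_trans (Prf.box_mono h.1) (Prf.ax (Ax.k B C)),
    Prf.imp_trans (Prf.box_mono h.2) (Prf.ax (Ax.k C B))⟩

theorem iff (h : EquivUnder Ext H B C) : Prf Ext (H.imp (B.iff C)) :=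
  Prf.mp_imp (Prf.mp_imp (Prf.imp_intro (Prf.land_intro _ _)) h.1) h.2

theorem psub (p : ℕ) :
    ∀ (A : Fml) {j : ℕ}, EquivUnder Ext (boxIter j falsum) B C →
      EquivUnder Ext (boxIter j falsum) (A.psub p B) (A.psub p C)
  | .verum, _, _ | .falsum, _, _ | .pred _ _, _, _ => refl _ _
  | .pvar q, _, h => by
    by_cases hq : q = p
    · simpa [Fml.psub, hq] using h
    · simpa [Fml.psub, hq] using refl _ _
  | .neg A, _, h => (psub p A h).neg
  | .imp A A', _, h => (psub p A h).imp (psub p A' h)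
  | .all u A, j, h => (psub p A h).all u (by simp [free_boxIter_falsum])
  | .box _, 0, _ => of_falsum _ _
  | .box A, j + 1, h => (psub p A (h.of_imp (Prf.boxIter_falsum_succ j))).box

theorem psub_of_modalized {p k : ℕ} (h : EquivUnder Ext (boxIter k falsum) B C) :
    ∀ A : Fml, Modalized p A →
      EquivUnder Ext (boxIter (k + 1) falsum) (A.psub p B) (A.psub p C)
  | .verum, _ | .falsum, _ | .pred _ _, _ => refl _ _
  | .pvar q, hA => by
    have hq : q ≠ p := fun hq => hA ⟨hq, rfl⟩
    simpa [Fml.psub, hq] using refl _ _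
  | .neg A, hA => psub_of_modalized h A hA |>.neg
  | .imp A A', hA =>
    (psub_of_modalized h A (hA <| .inl ·)).imp (psub_of_modalized h A' (hA <| .inr ·))
  | .all u A, hA => (psub_of_modalized h A hA).all u (by simp [free_boxIter_falsum])
  | .box A, _ => (h.psub p A).box

end EquivUnder

namespace Fml

def psubIter (p : ℕ) (A : Fml) : ℕ → Fml
  | 0 => verum
  | k + 1 => A.psub p (psubIter p A k)

theorem pvars_psub_subset (p : ℕ) (A B : Fml) :
    (A.psub p B).pvars ⊆ A.pvars.erase p ∪ B.pvars := by
  induction A with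
  | pvar q => by_cases hq : q = p <;> simp [psub, pvars, hq]
  | imp A A' ihA ihA' =>
    simp only [psub, pvars, Finset.erase_union_distrib]
    grind
  | neg _ ih | all _ _ ih | box _ ih => exact ih
  | _ => simp [psub, pvars]

theorem preds_psub_subset (p : ℕ) (A B : Fml) :
    (A.psub p B).preds ⊆ A.preds ∪ B.preds := by
  induction A with
  | pvar q => by_cases hq : q = p <;> simp [psub, preds, hq]
  | imp A A' ihA ihA' =>
    simp only [psub, preds]
    grind
  | neg _ ih | all _ _ ih | box _ ih => exact ih
  | _ => simp [psub, preds]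

theorem free_psub_subset (p : ℕ) (A B : Fml) :
    (A.psub p B).free ⊆ A.free ∪ B.free := by
  induction A with
  | pvar q => by_cases hq : q = p <;> simp [psub, free, hq]
  | imp A A' ihA ihA' =>
    simp only [psub, free]
    grind
  | all u A ih =>
    simp only [psub, free]
    grind
  | neg _ ih | box _ ih => exact ih
  | _ => simp [psub, free]

theorem pvars_psubIter {p : ℕ} {A : Fml} (hA : A.pvars ⊆ {p}) :
    ∀ k, (A.psubIter p k).pvars = ∅
  | 0 => rfl
  | k + 1 => by
    have h := pvars_psub_subset p A (A.psubIter p k)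
    rw [pvars_psubIter hA k, Finset.union_empty] at h
    exact Finset.subset_empty.mp (h.trans ((Finset.erase_subset_erase p hA).trans (by simp)))

theorem preds_psubIter_subset (p : ℕ) (A : Fml) : ∀ k, (A.psubIter p k).preds ⊆ A.preds
  | 0 => Finset.empty_subset _
  | k + 1 =>
    (preds_psub_subset p A _).trans (Finset.union_subset le_rfl (preds_psubIter_subset p A k))

theorem free_psubIter_subset (p : ℕ) (A : Fml) : ∀ k, (A.psubIter p k).free ⊆ A.free
  | 0 => Finset.empty_subset _
  | k + 1 =>
    (free_psub_subset p A _).trans (Finset.union_subset le_rfl (free_psubIter_subset p A k))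

end Fml

theorem equivUnder_psubIter {p : ℕ} {A : Fml} (hA : Modalized p A) :
    ∀ k, EquivUnder Ext (boxIter k falsum) (A.psubIter p k) (A.psubIter p (k + 1))
  | 0 => .of_falsum _ _
  | k + 1 => (equivUnder_psubIter hA k).psub_of_modalized A hA

end PML

open PML PML.Fml in
/-- fixed-point theorem for QK + □^{n+1}⊥. -/
theorem stmt2 (n p : ℕ) (A : Fml) (hmod : Modalized p A) (hp : A.pvars ⊆ {p}) :
    ∃ B : Fml, B.pvars = ∅ ∧ B.preds ⊆ A.preds ∧ B.free ⊆ A.free ∧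
      QK ((boxIter (n + 1) Fml.falsum).imp (B.iff (A.psub p B))) :=
  ⟨A.psubIter p (n + 1), pvars_psubIter hp _, preds_psubIter_subset p A _,
    free_psubIter_subset p A _, (equivUnder_psubIter hmod (n + 1)).iff⟩
end

section
/- If m ≥ n, then QK proves □^{n+1}⊥ → (A_m ↔ A_n), where for a fixed formula A(p) modalized in p, the sequence is defined by A_0 := A^{⊤(0)}(p)[⊤] and A_{k+1} := A^{⊤(k+1)}(p)[⊤, A_k, …, A_0]. -/
namespace PML

open Fml

namespace QKTools
open Fml

lemma a1 (A B : Fml) : QK (A.imp (B.imp A)) := .ax (.imp1 A B)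
lemma a2 (A B C : Fml) : QK ((A.imp (B.imp C)).imp ((A.imp B).imp (A.imp C))) := .ax (.imp2 A B C)

lemma d {H A B : Fml} (h1 : QK (H.imp (A.imp B))) (h2 : QK (H.imp A)) : QK (H.imp B) :=
  .mp (.mp (a2 H A B) h1) h2
lemma w {H A : Fml} (h : QK A) : QK (H.imp A) := .mp (a1 A H) h

lemma pid (A : Fml) : QK (A.imp A) :=
  .mp (.mp (a2 A (A.imp A) A) (a1 A (A.imp A))) (a1 A A)

lemma comp {A B C : Fml} (h1 : QK (A.imp B)) (h2 : QK (B.imp C)) : QK (A.imp C) :=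
  d (w h2) h1

lemma swap {A B C : Fml} (h : QK (A.imp (B.imp C))) : QK (B.imp (A.imp C)) :=
  comp (a1 B A) (.mp (a2 A B C) h)

lemma bc (X Y Z : Fml) : QK ((Y.imp Z).imp ((X.imp Y).imp (X.imp Z))) :=
  comp (a1 (Y.imp Z) X) (a2 X Y Z)

lemma dd {X Y A B : Fml} (h1 : QK (X.imp (Y.imp (A.imp B)))) (h2 : QK (X.imp (Y.imp A))) :
    QK (X.imp (Y.imp B)) := d (d (w (a2 Y A B)) h1) h2
lemma ww {X Y A : Fml} (h : QK A) : QK (X.imp (Y.imp A)) := w (w h)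
lemma ddd {X Y Z A B : Fml} (h1 : QK (X.imp (Y.imp (Z.imp (A.imp B)))))
    (h2 : QK (X.imp (Y.imp (Z.imp A)))) : QK (X.imp (Y.imp (Z.imp B))) :=
  dd (dd (ww (a2 Z A B)) h1) h2
lemma www {X Y Z A : Fml} (h : QK A) : QK (X.imp (Y.imp (Z.imp A))) := w (ww h)

lemma h31 (A B C : Fml) : QK (A.imp (B.imp (C.imp A))) :=
  comp (a1 A C) (a1 (C.imp A) B)
lemma h32 (A B C : Fml) : QK (A.imp (B.imp (C.imp B))) := w (a1 B C)
lemma h33 (A B C : Fml) : QK (A.imp (B.imp (C.imp C))) := ww (pid C)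

lemma negE (A : Fml) : QK (A.neg.imp (A.imp falsum)) := .ax (.negE A)
lemma negI (A : Fml) : QK ((A.imp falsum).imp A.neg) := .ax (.negI A)

lemma dni (A : Fml) : QK (A.imp A.neg.neg) :=
  d (w (negI A.neg)) (swap (negE A))

lemma landI (A B : Fml) : QK (A.imp (B.imp (A.land B))) := by
  have inner : QK (A.imp (B.imp ((A.imp B.neg).imp falsum))) :=
    ddd (ddd (www (negE B)) (ddd (h33 A B (A.imp B.neg)) (h31 A B (A.imp B.neg)))) (h32 A B (A.imp B.neg))
  exact dd (ww (negI (A.imp B.neg))) inner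

lemma landE1 (A B : Fml) : QK ((A.land B).imp A) := by
  have bot : QK (A.neg.imp (A.imp falsum)) := negE A
  have s1 : QK (A.neg.imp (A.imp B.neg)) :=
    dd (ww (Prf.ax (Ax.exfalso B.neg))) (dd (dd (ww (negE A)) (a1 A.neg A)) (w (pid A)))
  have s2 : QK (A.neg.imp (A.imp B.neg).neg.neg) := comp s1 (dni (A.imp B.neg))
  exact .mp (.ax (.contra A (A.imp B.neg).neg)) s2

lemma landE2 (A B : Fml) : QK ((A.land B).imp B) := by
  have s : QK (B.neg.imp (A.imp B.neg).neg.neg) := comp (a1 B.neg A) (dni (A.imp B.neg))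
  exact .mp (.ax (.contra B (A.imp B.neg).neg)) s

lemma iffI_h {H A B : Fml} (h1 : QK (H.imp (A.imp B))) (h2 : QK (H.imp (B.imp A))) :
    QK (H.imp (A.iff B)) := d (d (w (landI (A.imp B) (B.imp A))) h1) h2

lemma iffE1 (A B : Fml) : QK ((A.iff B).imp (A.imp B)) := landE1 _ _
lemma iffE2 (A B : Fml) : QK ((A.iff B).imp (B.imp A)) := landE2 _ _

lemma iff_refl_h (H A : Fml) : QK (H.imp (A.iff A)) :=
  w (.mp (.mp (landI (A.imp A) (A.imp A)) (pid A)) (pid A))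

lemma iff_of_both {H A B : Fml} (hA : QK (H.imp A)) (hB : QK (H.imp B)) :
    QK (H.imp (A.iff B)) :=
  iffI_h (d (w (a1 B A)) hB) (d (w (a1 A B)) hA)

lemma hcomp {H X Y Z : Fml} (h1 : QK (H.imp (X.imp Y))) (h2 : QK (H.imp (Y.imp Z))) :
    QK (H.imp (X.imp Z)) := d (d (w (bc X Y Z)) h2) h1

lemma iff_trans_h {H A B C : Fml} (h1 : QK (H.imp (A.iff B))) (h2 : QK (H.imp (B.iff C))) :
    QK (H.imp (A.iff C)) := by
  have ab := d (w (iffE1 A B)) h1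
  have bc' := d (w (iffE1 B C)) h2
  have ba := d (w (iffE2 A B)) h1
  have cb := d (w (iffE2 B C)) h2
  exact iffI_h (hcomp ab bc') (hcomp cb ba)

lemma contrap (A B : Fml) : QK ((A.imp B).imp (B.neg.imp A.neg)) := by
  have t : QK ((A.imp B).imp (B.neg.imp (A.imp falsum))) :=
    ddd (ddd (www (negE B)) (h32 (A.imp B) B.neg A))
        (ddd (h31 (A.imp B) B.neg A) (h33 (A.imp B) B.neg A))
  exact dd (ww (negI A)) t

lemma neg_cong {H A B : Fml} (h : QK (H.imp (A.iff B))) : QK (H.imp (A.neg.iff B.neg)) := by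
  have ab := d (w (iffE1 A B)) h
  have ba := d (w (iffE2 A B)) h
  exact iffI_h (d (w (contrap B A)) ba) (d (w (contrap A B)) ab)

lemma imp_cong {H A A' B B' : Fml} (hA : QK (H.imp (A.iff A'))) (hB : QK (H.imp (B.iff B'))) :
    QK (H.imp ((A.imp B).iff (A'.imp B'))) := by
  have aa' := d (w (iffE1 A A')) hA
  have a'a := d (w (iffE2 A A')) hA
  have bb' := d (w (iffE1 B B')) hB
  have b'b := d (w (iffE2 B B')) hB
  -- dir1 : H → ((A→B) → (A'→B'))
  have lift : ∀ {X Y : Fml}, QK (H.imp (X.imp Y)) → QK (H.imp ((A.imp B).imp (X.imp Y))) :=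
    fun h => d (w (a1 _ (A.imp B))) h
  have hyp : QK (H.imp ((A.imp B).imp (A.imp B))) := w (pid _)
  have dir1 : QK (H.imp ((A.imp B).imp (A'.imp B'))) := by
    have s1 : QK (H.imp ((A.imp B).imp (A'.imp B))) :=
      dd (dd (ww (bc A' A B)) hyp) (lift a'a)
    exact dd (dd (ww (bc A' B B')) (lift bb')) s1
  have lift2 : ∀ {X Y : Fml}, QK (H.imp (X.imp Y)) → QK (H.imp ((A'.imp B').imp (X.imp Y))) :=
    fun h => d (w (a1 _ (A'.imp B'))) h
  have hyp2 : QK (H.imp ((A'.imp B').imp (A'.imp B'))) := w (pid _)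
  have dir2 : QK (H.imp ((A'.imp B').imp (A.imp B))) := by
    have s1 : QK (H.imp ((A'.imp B').imp (A.imp B'))) :=
      dd (dd (ww (bc A A' B')) hyp2) (lift2 aa')
    exact dd (dd (ww (bc A B' B)) (lift2 b'b)) s1
  exact iffI_h dir1 dir2

lemma nec_imp {A B : Fml} (h : QK (A.imp B)) : QK (A.box.imp B.box) :=
  .mp (.ax (.k A B)) (.nec h)

lemma box_cong {H A B : Fml} (h : QK (H.imp (A.iff B))) :
    QK (H.box.imp (A.box.iff B.box)) := by
  have ab := d (w (iffE1 A B)) h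
  have ba := d (w (iffE2 A B)) h
  exact iffI_h (comp (nec_imp ab) (.ax (.k A B))) (comp (nec_imp ba) (.ax (.k B A)))

lemma all_cong {H A B : Fml} (u : ℕ) (h : QK (H.imp (A.iff B))) (hu : u ∉ H.free) :
    QK (H.imp ((Fml.all u A).iff (Fml.all u B))) := by
  have dir : ∀ {X Y : Fml}, QK (H.imp (X.imp Y)) → QK (H.imp ((Fml.all u X).imp (Fml.all u Y))) := by
    intro X Y hxy
    have g : QK (Fml.all u (H.imp (X.imp Y))) := .gen u hxy
    have k1 : QK ((Fml.all u H).imp (Fml.all u (X.imp Y))) := .mp (.ax (.allK H (X.imp Y) u)) g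
    have v : QK (H.imp (Fml.all u H)) := .ax (.allV H u hu)
    exact d (w (Prf.ax (Ax.allK X Y u))) (comp v k1)
  exact iffI_h (dir (d (w (iffE1 A B)) h)) (dir (d (w (iffE2 A B)) h))

lemma boxbot_box (A : Fml) : QK ((Fml.box falsum).imp A.box) :=
  nec_imp (.ax (.exfalso A))

lemma boxIter_free (k : ℕ) : (boxIter k falsum).free = ∅ := by
  induction k with
  | zero => rfl
  | succ k ih => simpa [boxIter, Fml.free] using ih


lemma dsub_cong (p : ℕ) (B : Fml) :
    ∀ (n : ℕ) (σ τ : ℕ → Fml),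
    (∀ i ≤ n, QK ((boxIter (n - i + 1) falsum).imp ((σ i).iff (τ i)))) →
    QK ((boxIter (n + 1) falsum).imp ((B.dsub p σ).iff (B.dsub p τ))) := by
  induction B with
  | verum => intro n σ τ h; simp only [dsub]; exact iff_refl_h _ _
  | falsum => intro n σ τ h; simp only [dsub]; exact iff_refl_h _ _
  | pvar q =>
    intro n σ τ h
    by_cases hq : q = p
    · simp only [dsub, if_pos hq]
      simpa using h 0 (Nat.zero_le n)
    · simp only [dsub, if_neg hq]; exact iff_refl_h _ _
  | pred P args => intro n σ τ h; simp only [dsub]; exact iff_refl_h _ _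
  | neg A ih => intro n σ τ h; simp only [dsub]; exact neg_cong (ih n σ τ h)
  | imp A B ihA ihB =>
    intro n σ τ h; simp only [dsub]; exact imp_cong (ihA n σ τ h) (ihB n σ τ h)
  | all u A ih =>
    intro n σ τ h; simp only [dsub]
    exact all_cong u (ih n σ τ h) (by simp [boxIter_free])
  | box A ih =>
    intro n σ τ h
    simp only [dsub]
    cases n with
    | zero =>
      exact iff_of_both (boxbot_box _) (boxbot_box _)
    | succ m =>
      show QK ((boxIter (m + 1) falsum).box.imp _)
      refine box_cong (ih m (fun i => σ (i + 1)) (fun i => τ (i + 1)) ?_)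
      intro i hi
      have := h (i + 1) (by omega)
      simpa [Nat.succ_sub_succ] using this

lemma eraseT_dsub_cong (p : ℕ) (B : Fml) :
    ∀ (m n : ℕ) (σ : ℕ → Fml), n ≤ m →
    QK ((boxIter (n + 1) falsum).imp
      (((eraseT m B).dsub p σ).iff ((eraseT n B).dsub p σ))) := by
  induction B with
  | verum => intro m n σ h; simp only [eraseT, dsub]; exact iff_refl_h _ _
  | falsum => intro m n σ h; simp only [eraseT, dsub]; exact iff_refl_h _ _
  | pvar q => intro m n σ h; simp only [eraseT, dsub]; exact iff_refl_h _ _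
  | pred P args => intro m n σ h; simp only [eraseT, dsub]; exact iff_refl_h _ _
  | neg A ih => intro m n σ h; simp only [eraseT, dsub]; exact neg_cong (ih m n σ h)
  | imp A B ihA ihB =>
    intro m n σ h; simp only [eraseT, dsub]
    exact imp_cong (ihA m n σ h) (ihB m n σ h)
  | all u A ih =>
    intro m n σ h; simp only [eraseT, dsub]
    exact all_cong u (ih m n σ h) (by simp [boxIter_free])
  | box A ih =>
    intro m n σ h
    cases n with
    | zero =>
      cases m with
      | zero => exact iff_refl_h _ _
      | succ M =>
        simp only [eraseT, dsub]
        exact iff_of_both (boxbot_box _) (w (.ax .verum))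
    | succ N =>
      cases m with
      | zero => omega
      | succ M =>
        simp only [eraseT, dsub]
        show QK ((boxIter (N + 1) falsum).box.imp _)
        exact box_cong (ih M N (fun i => σ (i + 1)) (by omega))

end QKTools

end PML

open PML PML.Fml in
/-- if m ≥ n then QK ⊢ □^{n+1}⊥ → (A_m ↔ A_n). -/
theorem stmt5 (m n p : ℕ) (A : Fml) (hmod : Modalized p A) (hmn : n ≤ m) :
    QK ((boxIter (n + 1) Fml.falsum).imp ((fpSeq p A m).iff (fpSeq p A n))) := by
  induction n using Nat.strong_induction_on generalizing m with
  | _ n IH =>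
  rcases n with _ | N
  · rcases m with _ | M
    · exact QKTools.iff_refl_h _ _
    · simp only [fpSeq]
      refine QKTools.iff_trans_h
        (B := (eraseT (M + 1) A).dsub p (fun _ => Fml.verum)) ?_ ?_
      · refine QKTools.dsub_cong p (eraseT (M + 1) A) 0 _ _ ?_
        intro i hi
        interval_cases i
        exact QKTools.iff_refl_h _ _
      · exact QKTools.eraseT_dsub_cong p A (M + 1) 0 _ (by omega)
  · rcases m with _ | M
    · omega
    · simp only [fpSeq]
      refine QKTools.iff_trans_h
        (B := (eraseT (M + 1) A).dsub p
          (fun i => match i with | 0 => Fml.verum | j + 1 => fpSeq p A (N - j))) ?_ ?_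
      · refine QKTools.dsub_cong p (eraseT (M + 1) A) (N + 1) _ _ ?_
        intro i hi
        rcases i with _ | j
        · exact QKTools.iff_refl_h _ _
        · have hj : j ≤ N := by omega
          have := IH (N - j) (by omega) (M - j) (by omega)
          simpa [Nat.succ_sub_succ] using this
      · exact QKTools.eraseT_dsub_cong p A (M + 1) (N + 1) _ (by omega)
end

section
/- In Smoryński's Kripke model M_S, for any world n, any formula A(u) with one free variable u, parameters from D_n, and containing only the unary predicate symbol P, and any m_1, m_2 ≥ n+2: M_S, n ⊨ A(m_1) ↔ A(m_2). -/
theorem Function.forall_rel_update {α β γ : Type*} [DecidableEq α] {r : β → γ → Prop}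
    {f : α → β} {g : α → γ} (hfg : ∀ x, r (f x) (g x)) (a : α) {b : β} {c : γ} (hbc : r b c) :
    ∀ x, r (Function.update f a b x) (Function.update g a c x) := by
  intro x
  rcases eq_or_ne x a with rfl | hx
  · simpa only [Function.update_self] using hbc
  · simpa only [Function.update_of_ne hx] using hfg x

namespace PML

theorem Sat.congr_of_rel (M : KModel) (E : M.W → M.Dom → M.Dom → Prop)
    (hrefl : ∀ w a, E w a a) (hR : ∀ {w v}, M.R w v → ∀ {a b}, E w a b → E v a b)
    (hI : ∀ w P {l₁ l₂}, List.Forall₂ (E w) l₁ l₂ → (M.I w P l₁ ↔ M.I w P l₂)) (A : Fml) :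
    ∀ w (ρ₁ ρ₂ : ℕ → M.Dom), (∀ x, E w (ρ₁ x) (ρ₂ x)) → (Sat M A w ρ₁ ↔ Sat M A w ρ₂) := by
  induction A with
  | verum | falsum | pvar => intros; rfl
  | pred P args =>
    intro w ρ₁ ρ₂ hρ
    exact hI w P (List.forall₂_map_left_iff.mpr (List.forall₂_map_right_iff.mpr
      (List.forall₂_same.mpr fun x _ => hρ x)))
  | neg A ih => intro w ρ₁ ρ₂ hρ; exact not_congr (ih w ρ₁ ρ₂ hρ)
  | imp A B ihA ihB => intro w ρ₁ ρ₂ hρ; exact imp_congr (ihA w ρ₁ ρ₂ hρ) (ihB w ρ₁ ρ₂ hρ)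
  | all u A ih =>
    intro w ρ₁ ρ₂ hρ
    exact forall₂_congr fun a _ => ih w _ _ (Function.forall_rel_update hρ u (hrefl w a))
  | box A ih =>
    intro w ρ₁ ρ₂ hρ
    exact forall₂_congr fun v hv => ih v ρ₁ ρ₂ fun x => hR hv (hρ x)

def MSIndist (w a b : ℕ) : Prop := a = b ∨ (w + 2 ≤ a ∧ w + 2 ≤ b)

theorem MSIndist.of_lt {w v a b : ℕ} (hv : v < w) (h : MSIndist w a b) : MSIndist v a b := by
  unfold MSIndist at *
  omega

theorem MS.I_congr (w P : ℕ) {l₁ l₂ : List ℕ} (h : List.Forall₂ (MSIndist w) l₁ l₂) :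
    MS.I w P l₁ ↔ MS.I w P l₂ := by
  show (P = 0 ∧ ∀ m ∈ l₁, m ≠ w + 1) ↔ (P = 0 ∧ ∀ m ∈ l₂, m ≠ w + 1)
  refine and_congr_right fun _ => ?_
  induction h with
  | nil => simp
  | cons hab _ ih =>
    simp only [List.forall_mem_cons]
    unfold MSIndist at hab
    exact and_congr (by omega) ih

theorem Sat.MS_congr (A : Fml) (w : ℕ) {ρ₁ ρ₂ : ℕ → ℕ} (hρ : ∀ x, MSIndist w (ρ₁ x) (ρ₂ x)) :
    Sat MS A w ρ₁ ↔ Sat MS A w ρ₂ :=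
  Sat.congr_of_rel MS MSIndist (fun _ _ => Or.inl rfl)
    (fun hv _ _ => MSIndist.of_lt hv) MS.I_congr A w ρ₁ ρ₂ hρ

end PML

open PML PML.Fml in
theorem stmt12_general (n u m₁ m₂ : ℕ) (A : Fml) (ρ : ℕ → ℕ)
    (h₁ : n + 2 ≤ m₁) (h₂ : n + 2 ≤ m₂) :
    Sat MS A n (Function.update ρ u m₁) ↔ Sat MS A n (Function.update ρ u m₂) := by
  exact Sat.MS_congr A n
    (Function.forall_rel_update (r := MSIndist n) (fun _ => Or.inl rfl) u (Or.inr ⟨h₁, h₂⟩))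

open PML PML.Fml in
/-- in Smoryński's model, formulas in P only cannot distinguish
elements ≥ n+2 at world n. -/
theorem stmt12 (n u m₁ m₂ : ℕ) (A : Fml) (ρ : ℕ → ℕ)
    (hA : OnlyP A) (hρ : ∀ x, ρ x ∈ MS.D n)
    (h₁ : n + 2 ≤ m₁) (h₂ : n + 2 ≤ m₂) :
    Sat MS A n (Function.update ρ u m₁) ↔ Sat MS A n (Function.update ρ u m₂) :=
  stmt12_general n u m₁ m₂ A ρ h₁ h₂
end

section
/- For each k, the finite truncation M_k of Smoryński's model agrees with M_S: for any n ≤ k and any sentence A with parameters from D_n^k containing only the predicate symbol P, M_S, n ⊨ A iff M_k, n ⊨ A. -/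
open PML PML.Fml in
/-- the truncations M_k agree with M_S. -/
theorem stmt13 (k : ℕ) (n : Fin (k + 1)) (A : Fml) (ρ : ℕ → ℕ)
    (hA : OnlyP A) (hρ : ∀ x, ρ x ∈ (Mk k).D n) :
    Sat MS A (n : ℕ) ρ ↔ Sat (Mk k) A n ρ := by
  suffices h : ∀ A : Fml, OnlyP A → ∀ n : Fin (k + 1), ∀ ρ ρ' : ℕ → ℕ,
      (∀ x, (n : ℕ) ≤ ρ x) → (∀ x, (n : ℕ) ≤ ρ' x ∧ ρ' x ≤ k + 2) →
      (∀ x, ρ x = ρ' x ∨ (k + 2 ≤ ρ x ∧ k + 2 ≤ ρ' x)) →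
      (Sat MS A (n : ℕ) ρ ↔ Sat (Mk k) A n ρ') by
    exact h A hA n ρ ρ (fun x => (hρ x).1) hρ (fun x => Or.inl rfl)
  intro A
  induction A with
  | verum => intros; simp [Sat]
  | falsum => intros; simp [Sat]
  | pvar q =>
    intro hA
    exfalso
    have := hA.2
    simp [Fml.pvars] at this
  | pred P args =>
    intro hA n ρ ρ' hρ hρ' hE
    have hsig := hA.1
    simp [Fml.predSig, Finset.subset_iff] at hsig
    obtain ⟨hP, hlen⟩ := hsig
    subst hP
    obtain ⟨u, hu⟩ : ∃ u, args = [u] := by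
      cases args with
      | nil => simp at hlen
      | cons a t =>
        cases t with
        | nil => exact ⟨a, rfl⟩
        | cons b t' => simp at hlen
    subst hu
    have hn : (n : ℕ) + 1 < k + 2 := by have := n.isLt; omega
    have hMS : Sat MS (Fml.pred 0 [u]) (n : ℕ) ρ ↔ ρ u ≠ (n : ℕ) + 1 := by
      show ((0 : ℕ) = 0 ∧ ∀ m ∈ [ρ u], m ≠ (n : ℕ) + 1) ↔ _
      simp
    have hMk : Sat (Mk k) (Fml.pred 0 [u]) n ρ' ↔ ρ' u ≠ (n : ℕ) + 1 := by
      show ((0 : ℕ) = 0 ∧ ∀ m ∈ [ρ' u], m ≠ (n : ℕ) + 1) ↔ _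
      simp
    rw [hMS, hMk]
    rcases hE u with he | ⟨h1, h2⟩
    · rw [he]
    · constructor <;> intro <;> omega
  | neg A ih =>
    intro hA n ρ ρ' hρ hρ' hE
    have hA' : OnlyP A := ⟨hA.1, hA.2⟩
    show ¬ _ ↔ ¬ _
    rw [ih hA' n ρ ρ' hρ hρ' hE]
  | imp A B ihA ihB =>
    intro hA n ρ ρ' hρ hρ' hE
    have hps := (Finset.union_subset_iff.mp hA.1 :
      A.predSig ⊆ {(0,1)} ∧ B.predSig ⊆ {(0,1)})
    have hpv := (Finset.union_eq_empty.mp hA.2 : A.pvars = ∅ ∧ B.pvars = ∅)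
    have h1 : OnlyP A := ⟨hps.1, hpv.1⟩
    have h2 : OnlyP B := ⟨hps.2, hpv.2⟩
    show (Sat MS A _ _ → Sat MS B _ _) ↔ (Sat (Mk k) A _ _ → Sat (Mk k) B _ _)
    rw [ihA h1 n ρ ρ' hρ hρ' hE, ihB h2 n ρ ρ' hρ hρ' hE]
  | all u A ih =>
    intro hA n ρ ρ' hρ hρ' hE
    have hA' : OnlyP A := ⟨hA.1, hA.2⟩
    change (∀ a : ℕ, (n : ℕ) ≤ a → Sat MS A (n : ℕ) (Function.update ρ u a)) ↔
      (∀ a : ℕ, ((n : ℕ) ≤ a ∧ a ≤ k + 2) → Sat (Mk k) A n (Function.update ρ' u a))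
    constructor
    · intro h a ⟨ha1, ha2⟩
      refine (ih hA' n (Function.update ρ u a) (Function.update ρ' u a) ?_ ?_ ?_).mp
        (h a ha1)
      · intro x
        rcases eq_or_ne x u with rfl | hx
        · rw [Function.update_self]; exact ha1
        · rw [Function.update_of_ne hx]; exact hρ x
      · intro x
        rcases eq_or_ne x u with rfl | hx
        · rw [Function.update_self]; exact ⟨ha1, ha2⟩
        · rw [Function.update_of_ne hx]; exact hρ' x
      · intro x
        rcases eq_or_ne x u with rfl | hx
        · rw [Function.update_self, Function.update_self]; exact Or.inl rfl
        · rw [Function.update_of_ne hx, Function.update_of_ne hx]; exact hE x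
    · intro h a ha
      have hnk : (n : ℕ) ≤ k + 2 := by have := n.isLt; omega
      refine (ih hA' n (Function.update ρ u a) (Function.update ρ' u (min a (k + 2)))
        ?_ ?_ ?_).mpr (h (min a (k + 2)) ⟨le_min ha hnk, min_le_right _ _⟩)
      · intro x
        rcases eq_or_ne x u with rfl | hx
        · rw [Function.update_self]; exact ha
        · rw [Function.update_of_ne hx]; exact hρ x
      · intro x
        rcases eq_or_ne x u with rfl | hx
        · rw [Function.update_self]; exact ⟨le_min ha hnk, min_le_right _ _⟩
        · rw [Function.update_of_ne hx]; exact hρ' x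
      · intro x
        rcases eq_or_ne x u with rfl | hx
        · rw [Function.update_self, Function.update_self]; omega
        · rw [Function.update_of_ne hx, Function.update_of_ne hx]; exact hE x
  | box A ih =>
    intro hA n ρ ρ' hρ hρ' hE
    have hA' : OnlyP A := ⟨hA.1, hA.2⟩
    change (∀ v : ℕ, v < (n : ℕ) → Sat MS A v ρ) ↔
      (∀ v : Fin (k + 1), (v : ℕ) < (n : ℕ) → Sat (Mk k) A v ρ')
    constructor
    · intro h v hv
      exact (ih hA' v ρ ρ' (fun x => by have := hρ x; omega)
        (fun x => by have := hρ' x; omega) hE).mp (h (v : ℕ) hv)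
    · intro h v hv
      have hvk : v < k + 1 := by have := n.isLt; omega
      refine (ih hA' ⟨v, hvk⟩ ρ ρ' ?_ ?_ hE).mpr (h ⟨v, hvk⟩ hv)
      · intro x
        show v ≤ ρ x
        have := hρ x; omega
      · intro x
        show v ≤ ρ' x ∧ ρ' x ≤ k + 2
        have := hρ' x; omega
end

section
/- The class FIFD of Kripke frames (finite, transitive, irreflexive, with all domains finite) does not have the fixed-point property: for the formula A(p) := ∀u □(p → P(u)), there is no sentence B containing only the predicate symbol P such that B ↔ A(B) is valid in every frame of FIFD. Concretely, for every such B there exists k such that M_k ⊭ B ↔ ∀u □(B → P(u)). -/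
namespace PML
open Fml

/-- Serves as the number of rounds of the Ehrenfeucht–Fraïssé game on `Mk k` (see `Similar`); any
measure bounding the quantifier depth, the modal depth and the number of free variables would do. -/
def Fml.size : Fml → ℕ
  | .pred _ args => args.length + 1
  | .neg A => A.size + 1
  | .imp A B => A.size + B.size + 1
  | .all _ A => A.size + 1
  | .box A => A.size + 1
  | _ => 1

lemma Fml.card_free_le_size (A : Fml) : A.free.card ≤ A.size := by
  induction A with
  | pred P args => exact args.toFinset_card_le.trans (Nat.le_succ _)
  | neg A ih => exact ih.trans (Nat.le_succ _)
  | imp A B ihA ihB =>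
    exact (Finset.card_union_le _ _).trans (by simp only [size]; omega)
  | all u A ih => exact (Finset.card_erase_le).trans (ih.trans (Nat.le_succ _))
  | box A ih => exact ih.trans (Nat.le_succ _)
  | _ => simp [free]

lemma sat_congr_of_eqOn_free (M : KModel) (A : Fml) {w : M.W} {ρ ρ' : ℕ → M.Dom}
    (h : ∀ x ∈ A.free, ρ x = ρ' x) : Sat M A w ρ ↔ Sat M A w ρ' := by
  induction A generalizing w ρ ρ' with
  | pred P args =>
    simp only [Sat, List.map_congr_left fun x hx => h x (List.mem_toFinset.mpr hx)]
  | neg A ih => exact not_congr (ih h)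
  | imp A B ihA ihB =>
    exact imp_congr (ihA fun x hx => h x (Finset.mem_union_left _ hx))
      (ihB fun x hx => h x (Finset.mem_union_right _ hx))
  | all u A ih =>
    refine forall_congr' fun a => imp_congr Iff.rfl (ih fun x hx => ?_)
    rcases eq_or_ne x u with rfl | hne
    · simp
    · simpa [hne] using h x (Finset.mem_erase.mpr ⟨hne, hx⟩)
  | box A ih => exact forall_congr' fun v => imp_congr Iff.rfl (ih h)
  | _ => rfl

lemma sat_congr_of_free_eq_empty (M : KModel) {A : Fml} (hA : A.free = ∅) {w : M.W}
    (ρ ρ' : ℕ → M.Dom) : Sat M A w ρ ↔ Sat M A w ρ' :=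
  sat_congr_of_eqOn_free M A (by simp [hA])

lemma sat_iff_iff (M : KModel) (A C : Fml) (w : M.W) (ρ : ℕ → M.Dom) :
    Sat M (A.iff C) w ρ ↔ (Sat M A w ρ ↔ Sat M C w ρ) := by
  simp only [Fml.iff, land, Sat]
  tauto

namespace OnlyP

lemma of_imp {A B : Fml} (h : OnlyP (A.imp B)) : OnlyP A ∧ OnlyP B := by
  obtain ⟨hsig, hvars⟩ := h
  simp only [predSig, pvars, Finset.union_subset_iff, Finset.union_eq_empty] at hsig hvars
  exact ⟨⟨hsig.1, hvars.1⟩, ⟨hsig.2, hvars.2⟩⟩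

lemma pred_eq {P : ℕ} {args : List ℕ} (h : OnlyP (pred P args)) : ∃ x, P = 0 ∧ args = [x] := by
  have hsig : (P, args.length) = (0, 1) := Finset.mem_singleton.mp (h.1 (by simp [predSig]))
  obtain ⟨rfl, hlen⟩ := Prod.mk.inj hsig
  exact (List.length_eq_one_iff.mp hlen).imp fun x hx => ⟨rfl, hx⟩

lemma not_pvar (q : ℕ) : ¬ OnlyP (pvar q) := by
  simp [OnlyP, pvars]

end OnlyP

/-- The winning condition for Duplicator in the `n`-round Ehrenfeucht–Fraïssé game on `Mk k`
between the world `v` with the assignment `ρ` of the variables in `S`, and `v'` with `ρ'`.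
Only distances up to `2` between an element and the current world matter, since `P(a)` fails
at `w` exactly when `a = w + 1`. -/
structure Similar (k n : ℕ) (S : Finset ℕ) (v : ℕ) (ρ : ℕ → ℕ) (v' : ℕ) (ρ' : ℕ → ℕ) :
    Prop where
  height : min v (2 * n) = min v' (2 * n)
  room : v + n ≤ k
  room' : v' + n ≤ k
  dom : ∀ x ∈ S, v ≤ ρ x ∧ ρ x ≤ k + 2
  dom' : ∀ x ∈ S, v' ≤ ρ' x ∧ ρ' x ≤ k + 2
  offset : ∀ x ∈ S, min (ρ x - v) 2 = min (ρ' x - v') 2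
  eq_iff : ∀ x ∈ S, ∀ y ∈ S, ρ x = ρ y ↔ ρ' x = ρ' y

namespace Similar

variable {k n : ℕ} {S : Finset ℕ} {v v' : ℕ} {ρ ρ' : ℕ → ℕ}

lemma symm (h : Similar k n S v ρ v' ρ') : Similar k n S v' ρ' v ρ where
  height := h.height.symm
  room := h.room'
  room' := h.room
  dom := h.dom'
  dom' := h.dom
  offset x hx := (h.offset x hx).symm
  eq_iff x hx y hy := (h.eq_iff x hx y hy).symm

lemma mono {m : ℕ} {T : Finset ℕ} (h : Similar k n S v ρ v' ρ') (hm : m ≤ n) (hT : T ⊆ S) :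
    Similar k m T v ρ v' ρ' where
  height := by have := h.height; omega
  room := by have := h.room; omega
  room' := by have := h.room'; omega
  dom x hx := h.dom x (hT hx)
  dom' x hx := h.dom' x (hT hx)
  offset x hx := h.offset x (hT hx)
  eq_iff x hx y hy := h.eq_iff x (hT hx) y (hT hy)

/-- Spoiler moves from `v'` to an earlier world `t'`; Duplicator answers with the predecessor
if `t'` is the predecessor, with `t'` itself if `t'` is low, and with `v - 2` otherwise. -/
lemma exists_lt (h : Similar k (n + 1) S v ρ v' ρ') {t' : ℕ} (ht' : t' < v') :
    ∃ t < v, Similar k n S t ρ t' ρ' := by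
  have hv := h.height
  obtain ⟨t, htv, hheight, hstep⟩ : ∃ t < v, min t (2 * n) = min t' (2 * n) ∧
      min (v - t) 2 = min (v' - t') 2 := by
    by_cases hpred : t' + 1 = v'
    · exact ⟨v - 1, by omega, by omega, by omega⟩
    by_cases hlow : t' < 2 * n
    · exact ⟨t', by omega, by omega, by omega⟩
    · exact ⟨v - 2, by omega, by omega, by omega⟩
  refine ⟨t, htv, hheight, by have := h.room; omega, by have := h.room'; omega,
    fun x hx => ?_, fun x hx => ?_, fun x hx => ?_, h.eq_iff⟩
  · have := h.dom x hx; omega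
  · have := h.dom' x hx; omega
  · have := h.dom x hx; have := h.dom' x hx; have := h.offset x hx; omega

/-- Spoiler picks `a'` at `v'`; Duplicator copies an element already named, keeps the distance
to `v` if it is below `2`, and otherwise picks an unnamed element, which exists by `room`. -/
lemma exists_matching_elem (h : Similar k (n + 1) S v ρ v' ρ') (hS : S.card ≤ n + 1)
    {a' : ℕ} (ha' : v' ≤ a' ∧ a' ≤ k + 2) :
    ∃ a, (v ≤ a ∧ a ≤ k + 2) ∧ min (a - v) 2 = min (a' - v') 2 ∧
      ∀ x ∈ S, a = ρ x ↔ a' = ρ' x := by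
  by_cases hnamed : ∃ y ∈ S, ρ' y = a'
  · obtain ⟨y, hy, rfl⟩ := hnamed
    exact ⟨ρ y, h.dom y hy, h.offset y hy, fun x hx =>
      ⟨fun e => ((h.eq_iff y hy x hx).1 e).symm ▸ rfl, fun e => (h.eq_iff y hy x hx).2 e⟩⟩
  push Not at hnamed
  have hfresh' : ∀ x ∈ S, ¬ a' = ρ' x := fun x hx e => hnamed x hx e.symm
  by_cases hnear : a' - v' < 2
  · refine ⟨v + (a' - v'), by have := h.room; omega, by omega, fun x hx => ?_⟩
    have := h.dom x hx; have := h.dom' x hx; have := h.offset x hx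
    exact iff_of_false (fun e => hfresh' x hx (by omega)) (hfresh' x hx)
  · obtain ⟨a, ha, hfresh⟩ : ∃ a ∈ Finset.Icc (v + 2) (k + 2), a ∉ S.image ρ := by
      refine Finset.exists_mem_notMem_of_card_lt_card ?_
      have := h.room
      rw [Nat.card_Icc]
      exact Finset.card_image_le.trans_lt (by omega)
    rw [Finset.mem_Icc] at ha
    exact ⟨a, by omega, by omega, fun x hx => iff_of_false
      (fun e => hfresh (e ▸ Finset.mem_image_of_mem ρ hx)) (hfresh' x hx)⟩

lemma exists_update (h : Similar k (n + 1) S v ρ v' ρ') (hS : S.card ≤ n + 1) (u : ℕ)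
    {a' : ℕ} (ha' : v' ≤ a' ∧ a' ≤ k + 2) :
    ∃ a, (v ≤ a ∧ a ≤ k + 2) ∧
      Similar k n (insert u S) v (Function.update ρ u a) v' (Function.update ρ' u a') := by
  obtain ⟨a, ha, hoff, hmatch⟩ := h.exists_matching_elem hS ha'
  have h' := h.mono n.le_succ le_rfl
  refine ⟨a, ha, h'.height, h'.room, h'.room', ?_, ?_, ?_, ?_⟩
  all_goals simp only [Finset.forall_mem_insert, Function.update_self]
  · exact ⟨ha, fun x hx => by by_cases hxu : x = u <;> simp [hxu, ha, h.dom x hx]⟩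
  · exact ⟨ha', fun x hx => by by_cases hxu : x = u <;> simp [hxu, ha', h.dom' x hx]⟩
  · exact ⟨hoff, fun x hx => by by_cases hxu : x = u <;> simp [hxu, hoff, h.offset x hx]⟩
  · refine ⟨⟨trivial, fun x hx => ?_⟩, fun x hx => ⟨?_, fun y hy => ?_⟩⟩
    · by_cases hxu : x = u <;> simp [hxu, hmatch x hx]
    · by_cases hxu : x = u <;> simp [hxu, eq_comm, hmatch x hx]
    · by_cases hxu : x = u <;> by_cases hyu : y = u <;>
        simp [hxu, hyu, eq_comm, hmatch x hx, hmatch y hy, h.eq_iff x hx y hy]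

end Similar

theorem sat_iff_of_similar {k : ℕ} (C : Fml) (hC : OnlyP C) {v v' : Fin (k + 1)}
    {ρ ρ' : ℕ → ℕ} (h : Similar k C.size C.free v ρ v' ρ') :
    Sat (Mk k) C v ρ ↔ Sat (Mk k) C v' ρ' := by
  induction C generalizing v v' ρ ρ' with
  | verum | falsum => rfl
  | pvar q => exact absurd hC (OnlyP.not_pvar q)
  | pred P args =>
    obtain ⟨x, rfl, rfl⟩ := hC.pred_eq
    have hx : x ∈ (pred 0 [x]).free := by simp [free]
    have := h.dom x hx; have := h.dom' x hx; have := h.offset x hx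
    simp only [Sat, Mk, List.map, List.mem_singleton, forall_eq, true_and]
    omega
  | neg A ih => exact not_congr (ih hC (h.mono (Nat.le_succ _) subset_rfl))
  | imp A B ihA ihB =>
    obtain ⟨hA, hB⟩ := hC.of_imp
    exact imp_congr (ihA hA (h.mono (by simp only [size]; omega) Finset.subset_union_left))
      (ihB hB (h.mono (by simp only [size]; omega) Finset.subset_union_right))
  | all u A ih =>
    have step : ∀ {v v' : Fin (k + 1)} {ρ ρ' : ℕ → ℕ},
        Similar k (A.size + 1) (A.free.erase u) v ρ v' ρ' →
        Sat (Mk k) (all u A) v ρ → Sat (Mk k) (all u A) v' ρ' := by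
      intro v v' ρ ρ' h hsat a' ha'
      obtain ⟨a, ha, ha_sim⟩ := h.exists_update (all u A).card_free_le_size u ha'
      exact (ih hC (ha_sim.mono le_rfl (Finset.insert_erase_subset _ _))).1 (hsat a ha)
    exact ⟨step h, step h.symm⟩
  | box A ih =>
    have step : ∀ {v v' : Fin (k + 1)} {ρ ρ' : ℕ → ℕ},
        Similar k (A.size + 1) A.free v ρ v' ρ' →
        Sat (Mk k) (box A) v ρ → Sat (Mk k) (box A) v' ρ' := by
      intro v v' ρ ρ' h hsat t' ht'
      obtain ⟨t, ht, ht_sim⟩ := h.exists_lt ht'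
      have htk : t < k + 1 := ht.trans v.isLt
      exact (ih hC (v := ⟨t, htk⟩) ht_sim).1 (hsat ⟨t, htk⟩ ht)
    exact ⟨step h, step h.symm⟩

section FixedPoint

variable {k : ℕ} {B : Fml}

lemma sat_pat_update_iff (u : ℕ) (w : Fin (k + 1)) (ρ : ℕ → ℕ) (a : ℕ) :
    Sat (Mk k) (Pat u) w (Function.update ρ u a) ↔ a ≠ w + 1 := by
  simp [Pat, Sat, Mk]

lemma sat_all_box_imp_pat_iff (hsent : B.free = ∅) (n : Fin (k + 1)) (ρ ρ' : ℕ → ℕ) :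
    Sat (Mk k) (all 0 ((B.imp (Pat 0)).box)) n ρ ↔ ∀ a, (n : ℕ) ≤ a → a ≤ k + 2 →
      ∀ m : Fin (k + 1), m < n → Sat (Mk k) B m ρ' → a ≠ m + 1 := by
  have hB (m : Fin (k + 1)) (a : ℕ) := sat_congr_of_free_eq_empty (Mk k) hsent (w := m)
    (Function.update ρ 0 a) ρ'
  refine forall_congr' fun a => ⟨fun hs ha ha' m hm hsat => ?_, fun hs ha m hm hsat => ?_⟩
  · exact (sat_pat_update_iff 0 m ρ a).1 (hs ⟨ha, ha'⟩ m hm ((hB m a).2 hsat))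
  · exact (sat_pat_update_iff 0 m ρ a).2 (hs ha.1 ha.2 m hm ((hB m a).1 hsat))

lemma sat_iff_of_fixedPoint (hsent : B.free = ∅)
    (hfix : MVal (Mk k) (B.iff (all 0 ((B.imp (Pat 0)).box)))) (n : Fin (k + 1))
    (ρ : ℕ → ℕ) :
    Sat (Mk k) B n ρ ↔ ∀ a, (n : ℕ) ≤ a → a ≤ k + 2 →
      ∀ m : Fin (k + 1), m < n → Sat (Mk k) B m ρ → a ≠ m + 1 := by
  have hρ₀ : ∀ x : ℕ, k + 2 ∈ (Mk k).D n := fun _ => ⟨by have := n.isLt; omega, le_rfl⟩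
  exact (sat_congr_of_free_eq_empty _ hsent ρ _).trans <|
    ((sat_iff_iff _ _ _ _ _).1 (hfix n _ hρ₀)).trans (sat_all_box_imp_pat_iff hsent n _ ρ)

lemma sat_iff_even_of_fixedPoint (hsent : B.free = ∅)
    (hfix : MVal (Mk k) (B.iff (all 0 ((B.imp (Pat 0)).box)))) (ρ : ℕ → ℕ) :
    ∀ n (hn : n < k + 1), Sat (Mk k) B ⟨n, hn⟩ ρ ↔ Even n := by
  intro n
  induction n with
  | zero =>
    intro hn
    refine iff_of_true ((sat_iff_of_fixedPoint hsent hfix _ ρ).2 ?_) Even.zero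
    exact fun _ _ _ m hm => absurd (Fin.lt_def.1 hm) (Nat.not_lt_zero _)
  | succ n ih =>
    intro hn
    refine (sat_iff_of_fixedPoint hsent hfix _ ρ).trans ?_
    rw [Nat.even_add_one, ← ih (by omega)]
    constructor
    · exact fun hs hsat => hs (n + 1) le_rfl (by omega) ⟨n, by omega⟩ (Nat.lt_succ_self n) hsat rfl
    · intro hnot a ha _ m hm hsat hma
      have hmn : (m : ℕ) = n := by
        have := Fin.lt_def.1 hm
        simp only at this ha
        omega
      obtain rfl : m = ⟨n, Nat.lt_of_succ_lt hn⟩ := Fin.ext hmn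
      exact hnot hsat

end FixedPoint

end PML

open PML PML.Fml in
/-- failure of the fixed-point property for FIFD; for every sentence B in P
only, some truncated Smoryński model M_k (a model on an FIFD frame) refutes
B ↔ ∀u □(B → P(u)). -/
theorem stmt15 (B : Fml) (hB : OnlyP B) (hsent : B.free = ∅) :
    ∃ k : ℕ, ¬ MVal (Mk k) (B.iff (Fml.all 0 ((B.imp (Pat 0)).box))) := by
  set r := B.size
  refine ⟨3 * r + 1, fun hfix => ?_⟩
  have hsim : Similar (3 * r + 1) r B.free (2 * r) (fun _ => 0) (2 * r + 1) (fun _ => 0) :=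
    { height := by omega, room := by omega, room' := by omega, dom := by simp [hsent],
      dom' := by simp [hsent], offset := by simp [hsent], eq_iff := by simp [hsent] }
  have hparity := sat_iff_of_similar (v := ⟨2 * r, by omega⟩) (v' := ⟨2 * r + 1, by omega⟩)
    B hB hsim
  rw [sat_iff_even_of_fixedPoint hsent hfix, sat_iff_even_of_fixedPoint hsent hfix] at hparity
  exact Nat.not_even_two_mul_add_one r (hparity.1 (even_two_mul r))
end
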